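/- arXiv:1805.10860 — 3 statements merged into one kernel-verified Lean document; each statement's English description precedes it below -/
import Mathlib

section
/- Let u : [-L,L] × [-b,b] → ℝ be smooth with u = 0 on the boundary, u > 0 in the interior, and ∂u/∂y < 0 on (-L,L) × (0,b]. If additionally ∂u/∂y ≡ 0 on the edge {L} × (0,b], then ∂²u/∂x∂y ≥ 0 on {L} × [0,b], and hence y ↦ |Du(L,y)| = -∂u/∂x(L,y) is nonincreasing on [0,b]. -/
open Set Filter Topology

/-!
On the edge `x = L` the function `∂u/∂y` vanishes, while just to the left of it `∂u/∂y < 0`;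
a one-sided difference quotient then gives `∂/∂x (∂u/∂y) ≥ 0` there, and by the symmetry of
mixed partials this is `∂/∂y (∂u/∂x)`, so `y ↦ ∂u/∂x (L, y)` is nondecreasing. In the same way
`u ≥ 0` inside and `u = 0` on the edge give `∂u/∂x (L, y) ≤ 0`, which together with
`∂u/∂y (L, y) = 0` identifies `|Du (L, y)|` with `-∂u/∂x (L, y)`.
-/

lemma deriv_nonpos_of_eq_zero_of_nonneg_left {f : ℝ → ℝ} {a c : ℝ} (hc : c < a)
    (hf : DifferentiableAt ℝ f a) (h0 : f a = 0) (hnn : ∀ x ∈ Ioo c a, 0 ≤ f x) :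
    deriv f a ≤ 0 := by
  have hslope : Tendsto (slope f a) (𝓝[<] a) (𝓝 (deriv f a)) :=
    hf.hasDerivAt.tendsto_slope.mono_left (nhdsWithin_mono _ fun x hx => ne_of_lt hx)
  refine le_of_tendsto hslope ?_
  filter_upwards [Ioo_mem_nhdsLT hc] with x hx
  rw [slope_def_field, h0, sub_zero]
  exact div_nonpos_of_nonneg_of_nonpos (hnn x hx) (by linarith [hx.2])

lemma deriv_nonneg_of_eq_zero_of_nonpos_left {f : ℝ → ℝ} {a c : ℝ} (hc : c < a)
    (hf : DifferentiableAt ℝ f a) (h0 : f a = 0) (hnp : ∀ x ∈ Ioo c a, f x ≤ 0) :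
    0 ≤ deriv f a := by
  have h := deriv_nonpos_of_eq_zero_of_nonneg_left (f := -f) hc hf.neg
    (by simp [h0]) fun x hx => by simpa using hnp x hx
  rwa [deriv.neg', Left.neg_nonpos_iff] at h

section PartialDerivatives

variable {E : Type*} [NormedAddCommGroup E] [NormedSpace ℝ E]
  {F : ℝ × ℝ → E} {F' : ℝ × ℝ →L[ℝ] E} {x y : ℝ}

lemma HasFDerivAt.hasDerivAt_partial_fst (hF : HasFDerivAt F F' (x, y)) :
    HasDerivAt (fun s => F (s, y)) (F' (1, 0)) x :=
  hF.comp_hasDerivAt x ((hasDerivAt_id x).prodMk (hasDerivAt_const x y))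

lemma HasFDerivAt.hasDerivAt_partial_snd (hF : HasFDerivAt F F' (x, y)) :
    HasDerivAt (fun t => F (x, t)) (F' (0, 1)) y :=
  hF.comp_hasDerivAt y ((hasDerivAt_const y x).prodMk (hasDerivAt_id y))

end PartialDerivatives

section SecondOrder

variable {u : ℝ × ℝ → ℝ}

lemma partial_fst_eq_fderiv {x y : ℝ} (hu : DifferentiableAt ℝ u (x, y)) :
    deriv (fun s => u (s, y)) x = fderiv ℝ u (x, y) (1, 0) :=
  hu.hasFDerivAt.hasDerivAt_partial_fst.deriv

lemma partial_snd_eq_fderiv {x y : ℝ} (hu : DifferentiableAt ℝ u (x, y)) :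
    deriv (fun t => u (x, t)) y = fderiv ℝ u (x, y) (0, 1) :=
  hu.hasFDerivAt.hasDerivAt_partial_snd.deriv

lemma ContDiff.partial_fst {m n : WithTop ℕ∞} (hu : ContDiff ℝ n u) (hmn : m + 1 ≤ n) :
    ContDiff ℝ m fun p : ℝ × ℝ => deriv (fun s => u (s, p.2)) p.1 := by
  have hu₁ := hu.differentiable (zero_lt_one.trans_le (le_add_self.trans hmn)).ne'
  simp only [partial_fst_eq_fderiv (hu₁ _)]
  exact (hu.fderiv_right hmn).clm_apply contDiff_const

lemma ContDiff.partial_snd {m n : WithTop ℕ∞} (hu : ContDiff ℝ n u) (hmn : m + 1 ≤ n) :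
    ContDiff ℝ m fun p : ℝ × ℝ => deriv (fun t => u (p.1, t)) p.2 := by
  have hu₁ := hu.differentiable (zero_lt_one.trans_le (le_add_self.trans hmn)).ne'
  simp only [partial_snd_eq_fderiv (hu₁ _)]
  exact (hu.fderiv_right hmn).clm_apply contDiff_const

theorem deriv_deriv_comm_of_contDiff (hu : ContDiff ℝ 2 u) (x y : ℝ) :
    deriv (fun t => deriv (fun s => u (s, t)) x) y
      = deriv (fun s => deriv (fun t => u (s, t)) y) x := by
  have hu₁ : Differentiable ℝ u := hu.differentiable two_ne_zero
  have hu₂ : HasFDerivAt (fderiv ℝ u) (fderiv ℝ (fderiv ℝ u) (x, y)) (x, y) :=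
    ((hu.fderiv_right le_rfl).differentiable one_ne_zero _).hasFDerivAt
  simp only [partial_fst_eq_fderiv (hu₁ _), partial_snd_eq_fderiv (hu₁ _)]
  rw [(hu₂.hasDerivAt_partial_snd.clm_apply (hasDerivAt_const y _)).deriv,
    (hu₂.hasDerivAt_partial_fst.clm_apply (hasDerivAt_const x _)).deriv]
  simpa using (hu.contDiffAt.isSymmSndFDerivAt (by simp)).eq (0, 1) (1, 0)

end SecondOrder

/-- Let `u` be smooth on the rectangle `[-L,L] × [-b,b]` with `u = 0` on the
boundary, `u > 0` in the interior, `∂u/∂y < 0` on `(-L,L) × (0,b]`, and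
`∂u/∂y ≡ 0` on the edge `{L} × (0,b]`.  Then `∂²u/∂x∂y ≥ 0` on `{L} × [0,b]`,
and hence `y ↦ |Du(L,y)| = -∂u/∂x(L,y)` is nonincreasing on `[0,b]`. -/
theorem edge_slope_monotone (L b : ℝ) (hL : 0 < L) (hb : 0 < b)
    (u : ℝ × ℝ → ℝ) (hu : ContDiff ℝ 2 u)
    (hbdry : ∀ p ∈ Set.Icc (-L) L ×ˢ Set.Icc (-b) b,
      (|p.1| = L ∨ |p.2| = b) → u p = 0)
    (hpos : ∀ p ∈ Set.Ioo (-L) L ×ˢ Set.Ioo (-b) b, 0 < u p)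
    (hy_neg : ∀ x ∈ Set.Ioo (-L) L, ∀ y ∈ Set.Ioc 0 b,
      deriv (fun t => u (x, t)) y < 0)
    (hy_edge : ∀ y ∈ Set.Ioc 0 b, deriv (fun t => u (L, t)) y = 0) :
    (∀ y ∈ Set.Icc 0 b,
      0 ≤ deriv (fun t => deriv (fun s => u (s, t)) L) y) ∧
    (∀ y ∈ Set.Ioc 0 b,
      Real.sqrt ((deriv (fun s => u (s, y)) L) ^ 2
          + (deriv (fun t => u (L, t)) y) ^ 2)
        = -(deriv (fun s => u (s, y)) L)) ∧
    (AntitoneOn (fun y => -(deriv (fun s => u (s, y)) L)) (Set.Icc 0 b)) := by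
  set g : ℝ → ℝ := fun t => deriv (fun s => u (s, t)) L
  have hg : ContDiff ℝ 1 g :=
    (hu.partial_fst (m := 1) (by norm_num)).comp (contDiff_const.prodMk contDiff_id)
  have hg'_nonneg_Ioc : ∀ y ∈ Ioc 0 b, 0 ≤ deriv g y := fun y hy => by
    rw [deriv_deriv_comm_of_contDiff hu]
    have hdiff := (hu.partial_snd (m := 1) (by norm_num)).comp
      (contDiff_id.prodMk (contDiff_const (c := y)))
    exact deriv_nonneg_of_eq_zero_of_nonpos_left (neg_lt_self hL)
      (hdiff.differentiable one_ne_zero L) (hy_edge y hy) fun x hx => (hy_neg x hx y hy).le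
  have hg'_nonneg : ∀ y ∈ Icc 0 b, 0 ≤ deriv g y := by
    rw [← closure_Ioc hb.ne]
    exact (isClosed_le continuous_const (hg.continuous_deriv le_rfl)).closure_subset_iff.2
      hg'_nonneg_Ioc
  have hu_nonneg : ∀ y ∈ Ioc 0 b, ∀ x ∈ Ioo (-L) L, 0 ≤ u (x, y) := fun y hy x hx => by
    rcases hy.2.lt_or_eq with hyb | rfl
    · exact (hpos (x, y) ⟨hx, by linarith [hy.1], hyb⟩).le
    · exact (hbdry (x, y) ⟨Ioo_subset_Icc_self hx, by linarith [hy.1], le_rfl⟩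
        (Or.inr (abs_of_pos hy.1))).ge
  have hg_nonpos : ∀ y ∈ Ioc 0 b, g y ≤ 0 := fun y hy =>
    deriv_nonpos_of_eq_zero_of_nonneg_left (neg_lt_self hL)
      ((hu.differentiable two_ne_zero).comp (differentiable_id.prodMk (differentiable_const y)) L)
      (hbdry (L, y) ⟨⟨by linarith, le_rfl⟩, by linarith [hy.1], hy.2⟩
        (Or.inl (abs_of_pos hL)))
      (hu_nonneg y hy)
  refine ⟨hg'_nonneg, fun y hy => ?_, ?_⟩
  · rw [hy_edge y hy, zero_pow two_ne_zero, add_zero, Real.sqrt_sq_eq_abs,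
      abs_of_nonpos (hg_nonpos y hy)]
  · refine MonotoneOn.neg (monotoneOn_of_deriv_nonneg (convex_Icc 0 b) hg.continuous.continuousOn
      (hg.differentiable one_ne_zero).differentiableOn fun y hy => hg'_nonneg y ?_)
    rw [interior_Icc] at hy
    exact Ioo_subset_Icc_self hy
end

section
/- Let W be an open subset of the open upper hemisphere H⁺ of S² whose boundary inside H⁺ is a disjoint union of great semicircles with endpoints on the equator, and suppose W is connected and nonempty. Then the collection of such semicircles contains at most two elements; i.e., either ∂W ∩ H⁺ is empty, a single great semicircle, or two disjoint great semicircles. -/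
open scoped RealInnerProductSpace


/-- The open upper hemisphere of `S² ⊂ ℝ³`. -/
def upperHemisphere : Set (EuclideanSpace ℝ (Fin 3)) :=
  {v | ‖v‖ = 1 ∧ 0 < v 2}

/-- A great semicircle in the upper hemisphere: the (nonempty) intersection of
the upper hemisphere with a `2`-dimensional linear subspace (a great circle
through two antipodal equatorial points). -/
def IsGreatSemicircle (C : Set (EuclideanSpace ℝ (Fin 3))) : Prop :=
  C.Nonempty ∧ ∃ P : Submodule ℝ (EuclideanSpace ℝ (Fin 3)),
    Module.finrank ℝ P = 2 ∧ C = upperHemisphere ∩ (P : Set (EuclideanSpace ℝ (Fin 3)))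

lemma exists_functional (W C : Set (EuclideanSpace ℝ (Fin 3)))
    (hWsub : W ⊆ upperHemisphere) (hWconn : IsConnected W)
    (h : IsGreatSemicircle C) (hdisjWC : Disjoint W C) :
    ∃ (P : Submodule ℝ (EuclideanSpace ℝ (Fin 3))) (n : EuclideanSpace ℝ (Fin 3)),
      Module.finrank ℝ P = 2 ∧ C = upperHemisphere ∩ (P : Set (EuclideanSpace ℝ (Fin 3))) ∧
      (∀ v, ⟪n, v⟫ = 0 ↔ v ∈ P) ∧ (∀ w ∈ W, 0 < ⟪n, w⟫) := by
  obtain ⟨hCne, P, hP2, hCP⟩ := h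
  -- a nonzero normal vector
  have hfr : Module.finrank ℝ Pᗮ = 1 := by
    have := P.finrank_add_finrank_orthogonal
    rw [hP2, finrank_euclideanSpace_fin] at this
    omega
  have hne : Pᗮ ≠ ⊥ := by
    intro hbot
    rw [hbot, finrank_bot] at hfr
    exact one_ne_zero hfr.symm
  obtain ⟨n₀, hn₀P, hn₀⟩ := Pᗮ.ne_bot_iff.mp hne
  have hspan : (Submodule.span ℝ {n₀}) = Pᗮ := by
    apply Submodule.eq_of_le_of_finrank_le
      ((Submodule.span_singleton_le_iff_mem _ _).mpr hn₀P)
    rw [hfr, finrank_span_singleton hn₀]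
  have hker : ∀ v, ⟪n₀, v⟫ = 0 ↔ v ∈ P := by
    intro v
    constructor
    · intro hv
      rw [← P.orthogonal_orthogonal]
      intro u hu
      rw [← hspan] at hu
      obtain ⟨c, rfl⟩ := Submodule.mem_span_singleton.mp hu
      rw [real_inner_smul_left, hv, mul_zero]
    · intro hv
      have := hn₀P v hv
      rwa [real_inner_comm] at this
  have hcont : Continuous fun w : EuclideanSpace ℝ (Fin 3) => ⟪n₀, w⟫ :=
    continuous_const.inner continuous_id
  have hWne : ∀ w ∈ W, ⟪n₀, w⟫ ≠ 0 := by
    intro w hw h0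
    exact (hdisjWC.ne_of_mem hw (by rw [hCP]; exact ⟨hWsub hw, (hker w).mp h0⟩)) rfl
  obtain ⟨w₀, hw₀⟩ := hWconn.nonempty
  have hsign : (∀ w ∈ W, 0 < ⟪n₀, w⟫) ∨ (∀ w ∈ W, ⟪n₀, w⟫ < 0) := by
    rcases (hWne w₀ hw₀).lt_or_gt with hneg | hpos
    · right
      intro w hw
      by_contra hle
      push_neg at hle
      have h0 : (0:ℝ) ∈ (fun w => ⟪n₀, w⟫) '' W := by
        have hoc := ((hWconn.isPreconnected.image _ hcont.continuousOn)).ordConnected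
        exact hoc.out ⟨w₀, hw₀, rfl⟩ ⟨w, hw, rfl⟩
          ⟨le_of_lt hneg, hle⟩
      obtain ⟨w', hw', hw'0⟩ := h0
      exact hWne w' hw' hw'0
    · left
      intro w hw
      by_contra hle
      push_neg at hle
      have h0 : (0:ℝ) ∈ (fun w => ⟪n₀, w⟫) '' W := by
        have hoc := ((hWconn.isPreconnected.image _ hcont.continuousOn)).ordConnected
        exact hoc.out ⟨w, hw, rfl⟩ ⟨w₀, hw₀, rfl⟩
          ⟨hle, le_of_lt hpos⟩
      obtain ⟨w', hw', hw'0⟩ := h0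
      exact hWne w' hw' hw'0
  rcases hsign with hpos | hneg
  · exact ⟨P, n₀, hP2, hCP, hker, hpos⟩
  · refine ⟨P, -n₀, hP2, hCP, ?_, ?_⟩
    · intro v
      rw [inner_neg_left, neg_eq_zero]
      · exact hker v
    · intro w hw
      rw [inner_neg_left]
      · exact neg_pos.mpr (hneg w hw)

/-- Let `W` be a nonempty connected subset of the open upper hemisphere, open
in the hemisphere, whose boundary inside the hemisphere is a disjoint union of
great semicircles.  Then there are at most two such semicircles. -/
theorem at_most_two_semicircles (W : Set (EuclideanSpace ℝ (Fin 3)))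
    (hWsub : W ⊆ upperHemisphere) (hWconn : IsConnected W)
    (hWopen : ∃ U : Set (EuclideanSpace ℝ (Fin 3)), IsOpen U ∧ W = U ∩ upperHemisphere)
    (𝒞 : Set (Set (EuclideanSpace ℝ (Fin 3))))
    (h𝒞 : ∀ C ∈ 𝒞, IsGreatSemicircle C)
    (hdisj : ∀ C ∈ 𝒞, ∀ C' ∈ 𝒞, C ≠ C' → Disjoint C C')
    (hbdry : upperHemisphere ∩ (closure W \ W) = ⋃₀ 𝒞) :
    𝒞.encard ≤ 2 := by
  by_contra hcon
  push_neg at hcon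
  -- extract three distinct semicircles
  obtain ⟨C₁, C₂, hC₁, hC₂, h12⟩ := Set.one_lt_encard_iff.mp (lt_of_le_of_lt (by norm_num) hcon)
  have h3 : ∃ C₃ ∈ 𝒞, C₃ ≠ C₁ ∧ C₃ ≠ C₂ := by
    by_contra h
    push_neg at h
    have hsub : 𝒞 ⊆ {C₁, C₂} := by
      intro C hC
      rcases eq_or_ne C C₁ with rfl | h1
      · exact Set.mem_insert _ _
      rcases eq_or_ne C C₂ with rfl | h2
      · exact Set.mem_insert_of_mem _ rfl
      · exact absurd (h C hC h1) h2
    exact absurd ((Set.encard_mono hsub).trans_eq (Set.encard_pair h12)) (not_le.mpr hcon)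
  obtain ⟨C₃, hC₃, h31, h32⟩ := h3
  -- basic facts
  have hsub𝒞 : ∀ C ∈ 𝒞, C ⊆ closure W \ W := by
    intro C hC x hx
    have hx' : x ∈ ⋃₀ 𝒞 := ⟨C, hC, hx⟩
    rw [← hbdry] at hx'
    exact hx'.2
  have hdisjW : ∀ C ∈ 𝒞, Disjoint W C :=
    fun C hC => Set.disjoint_left.mpr fun x hxW hxC => (hsub𝒞 C hC hxC).2 hxW
  have hCH : ∀ C ∈ 𝒞, C ⊆ upperHemisphere := by
    intro C hC
    obtain ⟨-, P, -, hCP⟩ := h𝒞 C hC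
    rw [hCP]; exact Set.inter_subset_left
  obtain ⟨P₁, n₁, hP₁2, hC₁P, hker₁, hn₁W⟩ :=
    exists_functional W C₁ hWsub hWconn (h𝒞 C₁ hC₁) (hdisjW C₁ hC₁)
  obtain ⟨P₂, n₂, hP₂2, hC₂P, hker₂, hn₂W⟩ :=
    exists_functional W C₂ hWsub hWconn (h𝒞 C₂ hC₂) (hdisjW C₂ hC₂)
  obtain ⟨P₃, n₃, hP₃2, hC₃P, hker₃, hn₃W⟩ :=
    exists_functional W C₃ hWsub hWconn (h𝒞 C₃ hC₃) (hdisjW C₃ hC₃)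
  obtain ⟨x₁, hx₁⟩ := (h𝒞 C₁ hC₁).1
  obtain ⟨x₂, hx₂⟩ := (h𝒞 C₂ hC₂).1
  obtain ⟨x₃, hx₃⟩ := (h𝒞 C₃ hC₃).1
  -- nonnegativity on the closure of W
  have hclos : ∀ n : EuclideanSpace ℝ (Fin 3), (∀ w ∈ W, 0 < ⟪n, w⟫) →
      ∀ y ∈ closure W, 0 ≤ ⟪n, y⟫ := by
    intro n hn y hy
    have hcl : IsClosed {v : EuclideanSpace ℝ (Fin 3) | 0 ≤ ⟪n, v⟫} :=
      isClosed_le continuous_const (continuous_const.inner continuous_id)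
    exact closure_minimal (fun w hw => (hn w hw).le) hcl hy
  -- strict positivity on the other semicircles
  have hcross : ∀ C ∈ 𝒞, ∀ C' ∈ 𝒞, C ≠ C' →
      ∀ (P : Submodule ℝ (EuclideanSpace ℝ (Fin 3))) (n : EuclideanSpace ℝ (Fin 3)),
      C = upperHemisphere ∩ (P : Set (EuclideanSpace ℝ (Fin 3))) →
      (∀ v, ⟪n, v⟫ = 0 ↔ v ∈ P) → (∀ w ∈ W, 0 < ⟪n, w⟫) →
      ∀ y ∈ C', 0 < ⟪n, y⟫ := by
    intro C hC C' hC' hne P n hCP hker hn y hy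
    have h0 : 0 ≤ ⟪n, y⟫ := hclos n hn y ((hsub𝒞 C' hC' hy).1)
    rcases h0.lt_or_eq with h | h
    · exact h
    · exfalso
      have hyC : y ∈ C := by
        rw [hCP]
        exact ⟨hCH C' hC' hy, (hker y).mp h.symm⟩
      exact Set.disjoint_left.mp (hdisj C hC C' hC' hne) hyC hy
  -- a horizontal vector in P₁
  have hπrange : Module.finrank ℝ (LinearMap.range
      (EuclideanSpace.projₗ (𝕜 := ℝ) (2 : Fin 3))) = 1 := by
    rw [LinearMap.range_eq_top.mpr, finrank_top, Module.finrank_self]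
    intro c
    exact ⟨EuclideanSpace.single 2 c, by simp⟩
  have hπker : Module.finrank ℝ (LinearMap.ker
      (EuclideanSpace.projₗ (𝕜 := ℝ) (2 : Fin 3))) = 2 := by
    have := LinearMap.finrank_range_add_finrank_ker (EuclideanSpace.projₗ (𝕜 := ℝ) (2 : Fin 3))
    rw [hπrange, finrank_euclideanSpace_fin] at this
    omega
  have hPK : P₁ ⊓ LinearMap.ker (EuclideanSpace.projₗ (𝕜 := ℝ) (2 : Fin 3)) ≠ ⊥ := by
    intro hbot
    have hsup := Submodule.finrank_sup_add_finrank_inf_eq P₁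
      (LinearMap.ker (EuclideanSpace.projₗ (𝕜 := ℝ) (2 : Fin 3)))
    have hle := Submodule.finrank_le
      (P₁ ⊔ LinearMap.ker (EuclideanSpace.projₗ (𝕜 := ℝ) (2 : Fin 3)))
    rw [finrank_euclideanSpace_fin] at hle
    rw [hbot, finrank_bot, hP₁2, hπker] at hsup
    omega
  obtain ⟨a, haPK, ha0⟩ := Submodule.ne_bot_iff _ |>.mp hPK
  have haP₁ : a ∈ P₁ := haPK.1
  have ha2 : a 2 = 0 := haPK.2
  -- the key limit argument: each normal of another semicircle kills a
  have hx₁H : x₁ ∈ upperHemisphere := hCH C₁ hC₁ hx₁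
  have hx₁P : x₁ ∈ P₁ := by rw [hC₁P] at hx₁; exact hx₁.2
  have hEq0 : ∀ n : EuclideanSpace ℝ (Fin 3), (∀ y ∈ C₁, 0 < ⟪n, y⟫) → ⟪n, a⟫ = 0 := by
    intro n hn
    by_contra h0
    have key : ∀ t : ℝ, 0 < ⟪n, x₁⟫ + t * ⟪n, a⟫ := by
      intro t
      have hpt2 : (x₁ + t • a) 2 = x₁ 2 := by
        simp [PiLp.add_apply, PiLp.smul_apply, ha2]
      have hx12 : 0 < x₁ 2 := hx₁H.2
      have hptne : x₁ + t • a ≠ 0 := by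
        intro h
        rw [h] at hpt2
        simp only [PiLp.zero_apply] at hpt2
        exact hx12.ne (hpt2 ▸ rfl)
      have hnorm : 0 < ‖x₁ + t • a‖ := norm_pos_iff.mpr hptne
      have hyC : ‖x₁ + t • a‖⁻¹ • (x₁ + t • a) ∈ C₁ := by
        rw [hC₁P]
        refine ⟨⟨norm_smul_inv_norm hptne, ?_⟩, ?_⟩
        · show 0 < (‖x₁ + t • a‖⁻¹ • (x₁ + t • a)) 2
          rw [PiLp.smul_apply, hpt2, smul_eq_mul]
          exact mul_pos (inv_pos.mpr hnorm) hx12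
        · exact Submodule.smul_mem _ _ (Submodule.add_mem _ hx₁P (Submodule.smul_mem _ _ haP₁))
      have hpos := hn _ hyC
      rw [real_inner_smul_right, inner_add_right, real_inner_smul_right] at hpos
      nlinarith [inv_pos.mpr hnorm]
    have hkey := key ((-⟪n, x₁⟫ - 1) / ⟪n, a⟫)
    rw [div_mul_cancel₀ _ h0] at hkey
    linarith
  have hn₂a : ⟪n₂, a⟫ = 0 :=
    hEq0 n₂ (hcross C₂ hC₂ C₁ hC₁ (Ne.symm h12) P₂ n₂ hC₂P hker₂ hn₂W)
  have hn₃a : ⟪n₃, a⟫ = 0 :=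
    hEq0 n₃ (hcross C₃ hC₃ C₁ hC₁ h31 P₃ n₃ hC₃P hker₃ hn₃W)
  have hn₁a : ⟪n₁, a⟫ = 0 := (hker₁ a).mpr haP₁
  -- inner products of normals with points on the other semicircles
  have p12 : 0 < ⟪n₁, x₂⟫ := hcross C₁ hC₁ C₂ hC₂ h12 P₁ n₁ hC₁P hker₁ hn₁W x₂ hx₂
  have p13 : 0 < ⟪n₁, x₃⟫ := hcross C₁ hC₁ C₃ hC₃ (Ne.symm h31) P₁ n₁ hC₁P hker₁ hn₁W x₃ hx₃
  have p21 : 0 < ⟪n₂, x₁⟫ := hcross C₂ hC₂ C₁ hC₁ (Ne.symm h12) P₂ n₂ hC₂P hker₂ hn₂W x₁ hx₁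
  have p23 : 0 < ⟪n₂, x₃⟫ := hcross C₂ hC₂ C₃ hC₃ (Ne.symm h32) P₂ n₂ hC₂P hker₂ hn₂W x₃ hx₃
  have p31 : 0 < ⟪n₃, x₁⟫ := hcross C₃ hC₃ C₁ hC₁ h31 P₃ n₃ hC₃P hker₃ hn₃W x₁ hx₁
  have p32 : 0 < ⟪n₃, x₂⟫ := hcross C₃ hC₃ C₂ hC₂ h32 P₃ n₃ hC₃P hker₃ hn₃W x₂ hx₂
  have z1 : ⟪n₁, x₁⟫ = 0 := (hker₁ x₁).mpr hx₁P
  have z2 : ⟪n₂, x₂⟫ = 0 := by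
    rw [hC₂P] at hx₂; exact (hker₂ x₂).mpr hx₂.2
  have z3 : ⟪n₃, x₃⟫ = 0 := by
    rw [hC₃P] at hx₃; exact (hker₃ x₃).mpr hx₃.2
  -- four vectors in a 3-dimensional space are dependent
  have hdep : ¬ LinearIndependent ℝ ![a, x₁, x₂, x₃] := by
    intro h
    have hcard := h.fintype_card_le_finrank
    rw [finrank_euclideanSpace_fin, Fintype.card_fin] at hcard
    omega
  obtain ⟨g, hg, i, hgi⟩ := Fintype.not_linearIndependent_iff.mp hdep
  have hexp : ∀ n : EuclideanSpace ℝ (Fin 3),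
      g 0 * ⟪n, a⟫ + g 1 * ⟪n, x₁⟫ + g 2 * ⟪n, x₂⟫ + g 3 * ⟪n, x₃⟫ = 0 := by
    intro n
    have h := congrArg (fun z => ⟪n, z⟫) hg
    simp only [Fin.sum_univ_four, inner_add_right, real_inner_smul_right, inner_zero_right,
      Matrix.cons_val_zero, Matrix.cons_val_one, Matrix.head_cons, Matrix.cons_val_two,
      Matrix.tail_cons, Matrix.cons_val_three] at h
    exact h
  have E₁ := hexp n₁
  have E₂ := hexp n₂
  have E₃ := hexp n₃
  rw [hn₁a, z1, mul_zero, mul_zero, zero_add, zero_add] at E₁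
  rw [hn₂a, z2, mul_zero, mul_zero, zero_add, add_zero] at E₂
  rw [hn₃a, z3, mul_zero, mul_zero, zero_add, add_zero] at E₃
  -- E₁ : g 2 * ⟪n₁,x₂⟫ + g 3 * ⟪n₁,x₃⟫ = 0
  -- E₂ : g 1 * ⟪n₂,x₁⟫ + g 3 * ⟪n₂,x₃⟫ = 0
  -- E₃ : g 1 * ⟪n₃,x₁⟫ + g 2 * ⟪n₃,x₂⟫ = 0
  have hK : g 1 * (⟪n₂, x₁⟫ * ⟪n₁, x₃⟫ * ⟪n₃, x₂⟫ + ⟪n₃, x₁⟫ * ⟪n₁, x₂⟫ * ⟪n₂, x₃⟫) = 0 := by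
    linear_combination (-(⟪n₂, x₃⟫ * ⟪n₃, x₂⟫)) * E₁ + (⟪n₁, x₃⟫ * ⟪n₃, x₂⟫) * E₂ +
      (⟪n₁, x₂⟫ * ⟪n₂, x₃⟫) * E₃
  have hg1 : g 1 = 0 := by
    rcases mul_eq_zero.mp hK with h | h
    · exact h
    · nlinarith [mul_pos (mul_pos p21 p13) p32, mul_pos (mul_pos p31 p12) p23]
  have hg3 : g 3 = 0 := by
    rw [hg1, zero_mul, zero_add] at E₂
    rcases mul_eq_zero.mp E₂ with h | h
    · exact h
    · exact absurd h p23.ne'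
  have hg2 : g 2 = 0 := by
    rw [hg1, zero_mul, zero_add] at E₃
    rcases mul_eq_zero.mp E₃ with h | h
    · exact h
    · exact absurd h p32.ne'
  have hg0 : g 0 = 0 := by
    rw [Fin.sum_univ_four] at hg
    simp only [Matrix.cons_val_zero, Matrix.cons_val_one, Matrix.head_cons, Matrix.cons_val_two,
      Matrix.tail_cons, Matrix.cons_val_three, hg1, hg2, hg3, zero_smul, add_zero] at hg
    exact (smul_eq_zero.mp hg).resolve_right ha0
  fin_cases i
  · exact hgi hg0
  · exact hgi hg1
  · exact hgi hg2
  · exact hgi hg3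
end

section
/- Let Δⁿ = {a ∈ ℝⁿ : aᵢ ≥ 0, Σaᵢ = 1} and let F : Δⁿ → Δⁿ be a continuous map that maps each closed face {a ∈ Δⁿ : aᵢ = 0 for i ∈ I} of Δⁿ into itself, for every index set I. Then F is surjective. -/
namespace SpernerAux
open Finset

abbrev RR (N m : ℕ) := (Fin N → Fin (m+1)) × (Fin N → Fin N)

variable {N m : ℕ}

def bco (r : RR N m) (i : ℕ) : ℤ := if h : i < N then (r.1 ⟨i, h⟩ : ℤ) else 0

def sva (r : RR N m) (j : ℕ) : ℕ := if h : j < N then (r.2 ⟨j, h⟩ : ℕ) else 0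

noncomputable def vco (r : RR N m) (k i : ℕ) : ℤ :=
  bco r i + (if ∃ j < k, sva r j + 1 = i then 1 else 0)
          - (if ∃ j < k, sva r j = i then 1 else 0)

def IsRoom (d : ℕ) (r : RR N m) : Prop :=
  (∀ i, d ≤ i → bco r i = 0) ∧
  ((∑ i ∈ range N, bco r i) = m) ∧
  (∀ j, d - 1 ≤ j → sva r j = 0) ∧
  (∀ j, j < d - 1 → sva r j + 1 < d) ∧
  (∀ j j', j < d - 1 → j' < d - 1 → sva r j = sva r j' → j = j') ∧
  (∀ k, k < d → ∀ i, 0 ≤ vco r k i)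

variable (ℓ : (ℕ → ℤ) → ℕ)

noncomputable def lb (r : RR N m) (k : ℕ) : ℕ := ℓ (fun i => vco r k i)

def Sper (N m : ℕ) (ℓ : (ℕ → ℤ) → ℕ) : Prop :=
  ∀ x : ℕ → ℤ, (∀ i, 0 ≤ x i) → ((∑ i ∈ range N, x i) = m) →
    (∀ i, N ≤ i → x i = 0) → ℓ x < N ∧ 0 < x (ℓ x)

open Classical in
noncomputable def fullF (d : ℕ) : Finset (RR N m) :=
  Finset.univ.filter (fun r => IsRoom d r ∧ (range d).image (lb ℓ r) = range d)

open Classical in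
noncomputable def doorF (d : ℕ) : Finset (RR N m × ℕ) :=
  (Finset.univ ×ˢ range d).filter
    (fun p => IsRoom d p.1 ∧ ((range d).erase p.2).image (lb ℓ p.1) = range (d-1))

def Bd (d : ℕ) (p : RR N m × ℕ) : Prop :=
  p.2 = d - 1 ∧ sva p.1 (d-2) = d - 2 ∧ bco p.1 (d-1) = 0

section basic

theorem vco_zero (r : RR N m) (i : ℕ) : vco r 0 i = bco r i := by
  simp [vco]

theorem bco_nonneg (r : RR N m) (i : ℕ) : 0 ≤ bco r i := by
  unfold bco; split <;> positivity

theorem bco_eq_zero_of_ge (r : RR N m) {i : ℕ} (h : N ≤ i) : bco r i = 0 := by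
  unfold bco; rw [dif_neg]; omega

theorem sva_lt (r : RR N m) (j : ℕ) (hN : 0 < N) : sva r j < N := by
  unfold sva; split
  · exact (r.2 _).2
  · exact hN

/-- vertex recursion -/
theorem ite_or_split {p q : Prop} [Decidable p] [Decidable q] [Decidable (p ∨ q)]
    (h : ¬(p ∧ q)) :
    (if p ∨ q then (1:ℤ) else 0) = (if p then 1 else 0) + (if q then 1 else 0) := by
  split_ifs <;> simp_all

theorem vco_succ {d : ℕ} {r : RR N m} (hr : IsRoom d r) {k : ℕ} (hk : k < d - 1) (i : ℕ) :
    vco r (k+1) i = vco r k i + (if sva r k + 1 = i then 1 else 0)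
      - (if sva r k = i then 1 else 0) := by
  classical
  unfold vco
  have e1 : (∃ j < k + 1, sva r j + 1 = i) ↔ ((∃ j < k, sva r j + 1 = i) ∨ sva r k + 1 = i) := by
    constructor
    · rintro ⟨j, hj, hji⟩
      rcases Nat.lt_succ_iff_lt_or_eq.1 hj with h | h
      · exact Or.inl ⟨j, h, hji⟩
      · exact Or.inr (h ▸ hji)
    · rintro (⟨j, hj, hji⟩ | h)
      · exact ⟨j, Nat.lt_succ_of_lt hj, hji⟩
      · exact ⟨k, Nat.lt_succ_self k, h⟩
  have e2 : (∃ j < k + 1, sva r j = i) ↔ ((∃ j < k, sva r j = i) ∨ sva r k = i) := by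
    constructor
    · rintro ⟨j, hj, hji⟩
      rcases Nat.lt_succ_iff_lt_or_eq.1 hj with h | h
      · exact Or.inl ⟨j, h, hji⟩
      · exact Or.inr (h ▸ hji)
    · rintro (⟨j, hj, hji⟩ | h)
      · exact ⟨j, Nat.lt_succ_of_lt hj, hji⟩
      · exact ⟨k, Nat.lt_succ_self k, h⟩
  rw [if_congr e1 rfl rfl, if_congr e2 rfl rfl]
  rw [ite_or_split, ite_or_split]
  · ring
  · rintro ⟨⟨j, hj, hji⟩, hki⟩
    exact absurd (hr.2.2.2.2.1 j k (by omega) hk (by omega)) (by omega)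
  · rintro ⟨⟨j, hj, hji⟩, hki⟩
    exact absurd (hr.2.2.2.2.1 j k (by omega) hk (by omega)) (by omega)

theorem vco_supp {d : ℕ} {r : RR N m} (hr : IsRoom d r) {k : ℕ} (hk : k < d) {i : ℕ}
    (hi : d ≤ i) : vco r k i = 0 := by
  unfold vco
  rw [hr.1 i hi, if_neg, if_neg]
  · simp
  · rintro ⟨j, hj, hji⟩
    have := hr.2.2.2.1 j (by omega)
    omega
  · rintro ⟨j, hj, hji⟩
    have := hr.2.2.2.1 j (by omega)
    omega

theorem vco_sum {d : ℕ} {r : RR N m} (hr : IsRoom d r) (hdN : d ≤ N) {k : ℕ} (hk : k < d) :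
    (∑ i ∈ range N, vco r k i) = m := by
  classical
  unfold vco
  rw [Finset.sum_sub_distrib, Finset.sum_add_distrib, hr.2.1]
  have hinj : ∀ j j', j < d - 1 → j' < d - 1 → sva r j = sva r j' → j = j' := hr.2.2.2.2.1
  have hval : ∀ j, j < d - 1 → sva r j + 1 < d := hr.2.2.2.1
  have h1 : ((range N).filter (fun i => ∃ j < k, sva r j + 1 = i)) =
      (range k).image (fun j => sva r j + 1) := by
    ext i
    simp only [mem_filter, mem_range, mem_image]
    constructor
    · rintro ⟨-, j, hj, hji⟩; exact ⟨j, hj, hji⟩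
    · rintro ⟨j, hj, hji⟩
      exact ⟨by have := hval j (by omega); omega, j, hj, hji⟩
  have h2 : ((range N).filter (fun i => ∃ j < k, sva r j = i)) =
      (range k).image (fun j => sva r j) := by
    ext i
    simp only [mem_filter, mem_range, mem_image]
    constructor
    · rintro ⟨-, j, hj, hji⟩; exact ⟨j, hj, hji⟩
    · rintro ⟨j, hj, hji⟩
      exact ⟨by have := hval j (by omega); omega, j, hj, hji⟩
  have c1 : ((range k).image (fun j => sva r j + 1)).card = k := by
    rw [Finset.card_image_of_injOn, Finset.card_range]
    intro a ha b hb hab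
    simp only [mem_coe, mem_range] at ha hb
    have hab' : sva r a + 1 = sva r b + 1 := hab
    exact hinj a b (by omega) (by omega) (by omega)
  have c2 : ((range k).image (fun j => sva r j)).card = k := by
    rw [Finset.card_image_of_injOn, Finset.card_range]
    intro a ha b hb hab
    simp only [mem_coe, mem_range] at ha hb
    exact hinj a b (by omega) (by omega) hab
  rw [Finset.sum_boole, Finset.sum_boole, h1, h2, c1, c2]
  ring

/-- each coordinate of each vertex is at most m -/
theorem vco_le {d : ℕ} {r : RR N m} (hr : IsRoom d r) (hdN : d ≤ N) {k : ℕ} (hk : k < d)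
    (i : ℕ) : vco r k i ≤ m := by
  by_cases hi : i < N
  · calc vco r k i ≤ ∑ i ∈ range N, vco r k i := by
          apply Finset.single_le_sum (fun j _ => hr.2.2.2.2.2 k hk j) (mem_range.2 hi)
      _ = m := vco_sum hr hdN hk
    
  · rw [vco_supp hr hk (by omega)]; positivity

/-- step values restricted to `[0, d-1)` are surjective onto `[0, d-1)` -/
theorem sva_surj {d : ℕ} {r : RR N m} (hr : IsRoom d r) {v : ℕ} (hv : v < d - 1) :
    ∃ j < d - 1, sva r j = v := by
  classical
  have himg : (range (d-1)).image (sva r) = range (d-1) := by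
    apply Finset.eq_of_subset_of_card_le
    · intro i hi
      simp only [mem_image, mem_range] at hi ⊢
      obtain ⟨j, hj, hji⟩ := hi
      have := hr.2.2.2.1 j hj
      omega
    · rw [Finset.card_image_of_injOn, Finset.card_range]
      intro a ha b hb hab
      simp only [mem_coe, mem_range] at ha hb
      exact hr.2.2.2.2.1 a b ha hb hab
  have : v ∈ (range (d-1)).image (sva r) := by rw [himg]; exact mem_range.2 hv
  simp only [mem_image, mem_range] at this
  obtain ⟨j, hj, hji⟩ := this
  exact ⟨j, hj, hji⟩

end basic

section bdchar

/-- profile of coordinate `d-1` along the chain -/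
theorem vco_last {d : ℕ} (hd : 2 ≤ d) {r : RR N m} (hr : IsRoom d r)
    {r₀ : ℕ} (hr₀ : r₀ < d - 1) (hr₀v : sva r r₀ = d - 2) {k : ℕ} (hk : k ≤ d - 1) :
    vco r k (d-1) = bco r (d-1) + (if r₀ < k then 1 else 0) := by
  classical
  unfold vco
  have hout : ¬ ∃ j < k, sva r j = d - 1 := by
    rintro ⟨j, hj, hji⟩
    have := hr.2.2.2.1 j (by omega)
    omega
  have hin : (∃ j < k, sva r j + 1 = d - 1) ↔ r₀ < k := by
    constructor
    · rintro ⟨j, hj, hji⟩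
      have := hr.2.2.2.2.1 j r₀ (by omega) hr₀ (by omega)
      omega
    · intro h
      exact ⟨r₀, h, by omega⟩
  rw [if_neg hout, if_congr hin rfl rfl]
  ring

theorem Bd_iff {d : ℕ} (hd : 2 ≤ d) {r : RR N m} (hr : IsRoom d r) {t : ℕ} (ht : t < d) :
    (t = d - 1 ∧ sva r (d-2) = d - 2 ∧ bco r (d-1) = 0) ↔
    (∀ k < d, k ≠ t → vco r k (d-1) = 0) := by
  obtain ⟨r₀, hr₀, hr₀v⟩ := sva_surj hr (show d - 2 < d - 1 by omega)
  constructor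
  · rintro ⟨rfl, hs, hb⟩
    intro k hk hkt
    have hr₀' : r₀ = d - 2 := hr.2.2.2.2.1 r₀ (d-2) hr₀ (by omega) (by omega)
    rw [vco_last hd hr hr₀ hr₀v (by omega), hb, if_neg (by omega)]
    ring
  · intro h
    have hb0 : 0 ≤ bco r (d-1) := bco_nonneg r _
    have hkey : r₀ + 1 = t := by
      by_contra hne
      have := h (r₀ + 1) (by omega) hne
      rw [vco_last hd hr hr₀ hr₀v (by omega), if_pos (by omega)] at this
      omega
    have htd : t = d - 1 := by
      by_contra hne
      have := h (d-1) (by omega) (by omega)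
      rw [vco_last hd hr hr₀ hr₀v (by omega), if_pos (by omega)] at this
      omega
    have hb : bco r (d-1) = 0 := by
      have := h 0 (by omega) (by omega)
      rw [vco_last hd hr hr₀ hr₀v (by omega), if_neg (by omega)] at this
      omega
    refine ⟨htd, ?_, hb⟩
    rw [← hr₀v]
    congr 1
    omega

end bdchar

section trichotomy

open Classical in
theorem door_count_parity {d : ℕ} (hd : 1 ≤ d) (f : ℕ → ℕ) (hf : ∀ k < d, f k < d) :
    ((range d).filter (fun t => ((range d).erase t).image f = range (d-1))).card % 2
    = (if (range d).image f = range d then 1 else 0) % 2 := by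
  classical
  by_cases hbij : (range d).image f = range d
  · rw [if_pos hbij]
    have hinj : Set.InjOn f (range d) := by
      apply Finset.injOn_of_card_image_eq
      rw [hbij]
    have : (d:ℕ) - 1 ∈ (range d).image f := by rw [hbij]; exact mem_range.2 (by omega)
    obtain ⟨t₀, ht₀, ht₀v⟩ := mem_image.1 this
    have heq : (range d).filter (fun t => ((range d).erase t).image f = range (d-1)) = {t₀} := by
      ext t
      simp only [mem_filter, mem_singleton]
      constructor
      · rintro ⟨htd, him⟩
        by_contra hne
        have hmem : t₀ ∈ (range d).erase t := mem_erase.2 ⟨fun hh => hne hh.symm, ht₀⟩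
        have : (d:ℕ) - 1 ∈ range (d-1) := by
          rw [← him, ← ht₀v]
          exact mem_image_of_mem f hmem
        rw [mem_range] at this
        omega
      · rintro rfl
        refine ⟨ht₀, ?_⟩
        apply Finset.eq_of_subset_of_card_le
        · intro v hv
          obtain ⟨k, hk, rfl⟩ := mem_image.1 hv
          have hk' := mem_of_mem_erase hk
          have h1 : f k < d := hf k (mem_range.1 hk')
          have h2 : f k ≠ d - 1 := by
            intro hh
            exact (mem_erase.1 hk).1 (hinj hk' ht₀ (by rw [hh, ht₀v]))
          exact mem_range.2 (by omega)
        · rw [card_range, Finset.card_image_of_injOn (hinj.mono (by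
            intro x hx; exact mem_of_mem_erase hx)), card_erase_of_mem ht₀, card_range]
    rw [heq, card_singleton]
  · rw [if_neg hbij]
    set A := (range d).filter (fun t => ((range d).erase t).image f = range (d-1)) with hA
    rcases A.eq_empty_or_nonempty with hAe | ⟨t₀, ht₀⟩
    · rw [hAe]; rfl
    · obtain ⟨ht₀d, h0⟩ := mem_filter.1 ht₀
      have hft : f t₀ < d - 1 := by
        by_contra hge
        have hfe : f t₀ = d - 1 := by have := hf t₀ (mem_range.1 ht₀d); omega
        apply hbij
        have hie : (range d) = insert t₀ ((range d).erase t₀) := (insert_erase ht₀d).symm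
        rw [hie, image_insert, h0, hfe]
        rw [← hie]
        ext x
        simp only [mem_insert, mem_range]
        omega
      have himg : (range d).image f = range (d-1) := by
        have : (range d) = insert t₀ ((range d).erase t₀) := (insert_erase ht₀d).symm
        rw [this, image_insert, h0]
        exact insert_eq_self.2 (mem_range.2 hft)
      set g : ℕ → ℕ := fun v => ((range d).filter (fun k => f k = v)).card with hg
      have hA_eq : A = (range d).filter (fun t => 2 ≤ g (f t)) := by
        ext t
        simp only [hA, mem_filter, and_congr_right_iff]
        intro htd
        constructor
        · intro him
          have hftm : f t ∈ range (d-1) := by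
            rw [← himg]; exact mem_image_of_mem f htd
          rw [← him] at hftm
          obtain ⟨k, hk, hkv⟩ := mem_image.1 hftm
          have hsub : ({t, k} : Finset ℕ) ⊆ (range d).filter (fun k => f k = f t) := by
            intro x hx
            rcases mem_insert.1 hx with rfl | hx
            · exact mem_filter.2 ⟨htd, rfl⟩
            · rw [mem_singleton] at hx
              subst hx
              exact mem_filter.2 ⟨mem_of_mem_erase hk, hkv⟩
          have : ({t, k} : Finset ℕ).card = 2 := by
            rw [card_pair]
            exact fun hh => (mem_erase.1 hk).1 (hh ▸ rfl)
          calc 2 = ({t, k} : Finset ℕ).card := this.symm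
            _ ≤ _ := card_le_card hsub
        · intro h2
          have hmem : t ∈ (range d).filter (fun k => f k = f t) := mem_filter.2 ⟨htd, rfl⟩
          have h2' : 2 ≤ ((range d).filter (fun k => f k = f t)).card := h2
          have hne : (((range d).filter (fun k => f k = f t)).erase t).Nonempty := by
            rw [← card_pos, card_erase_of_mem hmem]
            omega
          obtain ⟨k, hk⟩ := hne
          have hkt : k ≠ t := (mem_erase.1 hk).1
          have hkd : k ∈ range d := (mem_filter.1 (mem_of_mem_erase hk)).1
          have hkv : f k = f t := (mem_filter.1 (mem_of_mem_erase hk)).2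
          apply subset_antisymm
          · intro v hv
            obtain ⟨x, hx, rfl⟩ := mem_image.1 hv
            rw [← himg]
            exact mem_image_of_mem f (mem_of_mem_erase hx)
          · intro v hv
            rw [← himg] at hv
            obtain ⟨x, hx, rfl⟩ := mem_image.1 hv
            by_cases hxt : x = t
            · subst hxt
              exact mem_image.2 ⟨k, mem_erase.2 ⟨hkt, hkd⟩, hkv⟩
            · exact mem_image.2 ⟨x, mem_erase.2 ⟨hxt, hx⟩, rfl⟩
      have hsum : (range d).card = ∑ v ∈ range (d-1), g v := by
        apply Finset.card_eq_sum_card_fiberwise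
        intro x hx
        rw [← himg]
        exact mem_image_of_mem f hx
      rw [card_range] at hsum
      have hg1 : ∀ v ∈ range (d-1), 1 ≤ g v := by
        intro v hv
        rw [← himg] at hv
        obtain ⟨x, hx, rfl⟩ := mem_image.1 hv
        rw [hg]
        exact card_pos.2 ⟨x, mem_filter.2 ⟨hx, rfl⟩⟩
      have hsum1 : ∑ v ∈ range (d-1), (g v - 1) = 1 := by
        have he : ∀ v ∈ range (d-1), g v = (g v - 1) + 1 := by
          intro v hv; have := hg1 v hv; omega
        rw [Finset.sum_congr rfl he, Finset.sum_add_distrib, Finset.sum_const,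
          card_range, smul_eq_mul] at hsum
        omega
      obtain ⟨v₀, hv₀, hv₀pos⟩ : ∃ v₀ ∈ range (d-1), 0 < g v₀ - 1 := by
        by_contra hno
        push_neg at hno
        have : ∑ v ∈ range (d-1), (g v - 1) = 0 :=
          Finset.sum_eq_zero (fun v hv => by have := hno v hv; omega)
        omega
      have hsplit : (g v₀ - 1) + ∑ v ∈ (range (d-1)).erase v₀, (g v - 1)
          = ∑ v ∈ range (d-1), (g v - 1) := Finset.add_sum_erase (range (d-1)) (fun v => g v - 1) hv₀
      have hrest : ∀ v ∈ range (d-1), v ≠ v₀ → g v = 1 := by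
        intro v hv hvne
        have hz : ∑ v ∈ (range (d-1)).erase v₀, (g v - 1) = 0 := by omega
        have := Finset.sum_eq_zero_iff.1 hz v (mem_erase.2 ⟨hvne, hv⟩)
        have := hg1 v hv
        omega
      have hv₀2 : g v₀ = 2 := by
        have := hg1 v₀ hv₀
        omega
      have hAfin : A = (range d).filter (fun t => f t = v₀) := by
        rw [hA_eq]
        apply Finset.filter_congr
        intro t htd
        constructor
        · intro h2
          by_contra hne
          have hftm : f t ∈ range (d-1) := by
            rw [← himg]; exact mem_image_of_mem f htd
          have := hrest (f t) hftm hne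
          omega
        · intro he; rw [he, hv₀2]
      rw [hAfin]
      have : ((range d).filter (fun t => f t = v₀)).card = g v₀ := rfl
      rw [this, hv₀2]

end trichotomy

section count1

open Classical in
noncomputable def roomF (N m d : ℕ) : Finset (RR N m) := Finset.univ.filter (IsRoom d)

theorem lb_lt (hsp : Sper N m ℓ) {d : ℕ} (hdN : d ≤ N) {r : RR N m} (hr : IsRoom d r)
    {k : ℕ} (hk : k < d) : lb ℓ r k < d ∧ 0 < vco r k (lb ℓ r k) := by
  have h := hsp (fun i => vco r k i) (fun i => hr.2.2.2.2.2 k hk i) (vco_sum hr hdN hk)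
    (fun i hi => vco_supp hr hk (by omega))
  have hpos : 0 < vco r k (ℓ fun i => vco r k i) := h.2
  have hlt : lb ℓ r k < d := by
    by_contra hge
    rw [vco_supp hr hk (by unfold lb at hge; omega)] at hpos
    exact absurd hpos (by omega)
  exact ⟨hlt, hpos⟩

open Classical in
theorem doorF_card {d : ℕ} :
    (doorF ℓ d : Finset (RR N m × ℕ)).card =
      ∑ r ∈ roomF N m d,
        ((range d).filter (fun t => ((range d).erase t).image (lb ℓ r) = range (d-1))).card := by
  classical
  rw [Finset.card_eq_sum_card_fiberwise (f := Prod.fst) (t := roomF N m d)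
    (by intro p hp
        simp only [doorF, roomF, Finset.mem_coe, Finset.mem_filter, Finset.mem_product] at hp ⊢
        exact ⟨Finset.mem_univ _, hp.2.1⟩)]
  apply Finset.sum_congr rfl
  intro r hr
  have hrr : IsRoom d r := by
    simp only [roomF, Finset.mem_filter] at hr; exact hr.2
  have himg : (doorF ℓ d).filter (fun p : RR N m × ℕ => p.1 = r) =
      ((range d).filter (fun t => ((range d).erase t).image (lb ℓ r) = range (d-1))).image
        (fun t => (r, t)) := by
    ext ⟨r', t⟩
    simp only [doorF, Finset.mem_filter, Finset.mem_product, Finset.mem_image,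
      Finset.mem_univ, true_and]
    constructor
    · rintro ⟨⟨htd, -, hlab⟩, rfl⟩
      exact ⟨t, ⟨htd, hlab⟩, rfl⟩
    · rintro ⟨t', ⟨htd, hlab⟩, heq⟩
      injection heq with h1 h2
      subst h1; subst h2
      exact ⟨⟨htd, hrr, hlab⟩, rfl⟩
  rw [himg, Finset.card_image_of_injective _ (Prod.mk_right_injective r)]

open Classical in
theorem door_full_parity (hsp : Sper N m ℓ) {d : ℕ} (hd : 1 ≤ d) (hdN : d ≤ N) :
    (doorF ℓ d : Finset (RR N m × ℕ)).card % 2 = (fullF ℓ d : Finset (RR N m)).card % 2 := by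
  classical
  rw [doorF_card, Finset.sum_nat_mod]
  have hcongr : ∀ r ∈ roomF N m d,
      ((range d).filter (fun t => ((range d).erase t).image (lb ℓ r) = range (d-1))).card % 2
      = (if (range d).image (lb ℓ r) = range d then 1 else 0) % 2 := by
    intro r hr
    have hrr : IsRoom d r := by simp only [roomF, Finset.mem_filter] at hr; exact hr.2
    exact door_count_parity hd _ (fun k hk => (lb_lt ℓ hsp hdN hrr hk).1)
  rw [Finset.sum_congr rfl hcongr, ← Finset.sum_nat_mod]
  have : ∑ r ∈ roomF N m d, (if (range d).image (lb ℓ r) = range d then 1 else 0)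
      = ((roomF N m d).filter (fun r => (range d).image (lb ℓ r) = range d)).card :=
    (Finset.card_filter _ _).symm
  rw [this]
  congr 2
  ext r
  simp only [fullF, roomF, Finset.mem_filter, Finset.mem_univ, true_and, and_assoc]

end count1

section helpers

theorem even_card_of_involution {α : Type*} [DecidableEq α] (s : Finset α) (f : α → α)
    (h : ∀ a ∈ s, f a ∈ s ∧ f (f a) = a ∧ f a ≠ a) : s.card % 2 = 0 := by
  classical
  generalize hn : s.card = n
  induction n using Nat.strong_induction_on generalizing s with
  | _ n ih =>
    rcases s.eq_empty_or_nonempty with rfl | ⟨a, ha⟩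
    · simp only [card_empty] at hn; omega
    · obtain ⟨hfa, hffa, hne⟩ := h a ha
      set s' := (s.erase a).erase (f a) with hs'
      have hfam : f a ∈ s.erase a := mem_erase.2 ⟨hne, hfa⟩
      have hcard : s'.card = n - 2 := by
        rw [hs', card_erase_of_mem hfam, card_erase_of_mem ha, hn]
        omega
      have hn2 : 2 ≤ n := by
        have hsub : ({a, f a} : Finset α) ⊆ s := by
          intro x hx
          rcases mem_insert.1 hx with rfl | hx
          · exact ha
          · rw [mem_singleton] at hx; exact hx ▸ hfa
        have := card_le_card hsub
        rw [card_pair (fun hh => hne hh.symm), hn] at this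
        exact this
      have hprop : ∀ b ∈ s', f b ∈ s' ∧ f (f b) = b ∧ f b ≠ b := by
        intro b hb
        have hbs : b ∈ s := mem_of_mem_erase (mem_of_mem_erase hb)
        have hb1 : b ≠ f a := (mem_erase.1 hb).1
        have hb2 : b ≠ a := (mem_erase.1 (mem_of_mem_erase hb)).1
        refine ⟨?_, (h b hbs).2.1, (h b hbs).2.2⟩
        refine mem_erase.2 ⟨?_, mem_erase.2 ⟨?_, (h b hbs).1⟩⟩
        · intro he
          exact hb2 (by rw [← (h b hbs).2.1, he, hffa])
        · intro he
          exact hb1 (by rw [← (h b hbs).2.1, he])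
      have := ih (n-2) (by omega) s' hprop hcard
      omega

/-- build an encoded room from integer base spec and step spec -/
def mkR (N m : ℕ) (b : ℕ → ℤ) (s : ℕ → ℕ) : RR N m :=
  (fun i => ⟨min (b (i:ℕ)).toNat m, by omega⟩,
   fun j => ⟨min (s (j:ℕ)) (N-1), by have := j.2; omega⟩)

theorem bco_mkR {b : ℕ → ℤ} {s : ℕ → ℕ} (hb : ∀ i, i < N → 0 ≤ b i ∧ b i ≤ m) (i : ℕ) :
    bco (mkR N m b s) i = if i < N then b i else 0 := by
  unfold bco mkR
  split
  · next h =>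
    obtain ⟨h1, h2⟩ := hb i h
    show (((min (b i).toNat m : ℕ)) : ℤ) = b i
    omega
  · next h => rfl

theorem sva_mkR {b : ℕ → ℤ} {s : ℕ → ℕ} (hs : ∀ j, j < N → s j < N) (j : ℕ) :
    sva (mkR N m b s) j = if j < N then s j else 0 := by
  unfold sva mkR
  split
  · next h =>
    have := hs j h
    show min (s j) (N-1) = s j
    omega
  · next h => rfl

theorem RR_ext {r r' : RR N m} (hb : ∀ i, i < N → bco r i = bco r' i)
    (hs : ∀ j, j < N → sva r j = sva r' j) : r = r' := by
  obtain ⟨b1, s1⟩ := r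
  obtain ⟨b2, s2⟩ := r'
  simp only [Prod.mk.injEq]
  constructor
  · funext i
    have := hb i.1 i.2
    unfold bco at this
    rw [dif_pos i.2, dif_pos i.2] at this
    ext
    exact_mod_cast this
  · funext j
    have := hs j.1 j.2
    unfold sva at this
    rw [dif_pos j.2, dif_pos j.2] at this
    ext
    exact_mod_cast this

theorem ex_step_iff {d : ℕ} {r : RR N m} (hr : IsRoom d r) {j₀ c k : ℕ}
    (hj₀ : j₀ < d - 1) (hc : sva r j₀ = c) (hk : k ≤ d - 1) :
    (∃ j < k, sva r j = c) ↔ j₀ < k := by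
  constructor
  · rintro ⟨j, hj, hjc⟩
    have := hr.2.2.2.2.1 j j₀ (by omega) hj₀ (by omega)
    omega
  · intro h
    exact ⟨j₀, h, hc⟩

theorem ex_step_neg {d : ℕ} {r : RR N m} (hr : IsRoom d r) {c k : ℕ}
    (hno : ¬ ∃ j < d - 1, sva r j = c) (hk : k ≤ d - 1) :
    ¬ (∃ j < k, sva r j = c) := by
  rintro ⟨j, hj, hjc⟩
  exact hno ⟨j, by omega, hjc⟩

/-- at a door, every color `c < d-1` is realized at a kept vertex with positive coordinate -/
theorem door_pos (hsp : Sper N m ℓ) {d : ℕ} (hdN : d ≤ N) {r : RR N m} (hr : IsRoom d r)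
    {t : ℕ} (hdoor : ((range d).erase t).image (lb ℓ r) = range (d-1)) {c : ℕ}
    (hc : c < d - 1) : ∃ k < d, k ≠ t ∧ 0 < vco r k c := by
  have : c ∈ ((range d).erase t).image (lb ℓ r) := by rw [hdoor]; exact mem_range.2 hc
  obtain ⟨k, hk, hkc⟩ := mem_image.1 this
  have hkd : k < d := mem_range.1 (mem_of_mem_erase hk)
  have := (lb_lt ℓ hsp hdN hr hkd).2
  rw [hkc] at this
  exact ⟨k, hkd, (mem_erase.1 hk).1, this⟩

end helpers

section midpivot

def midP (N m t : ℕ) (r : RR N m) : RR N m :=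
  mkR N m (fun i => bco r i)
    (fun j => if j = t - 1 then sva r t else if j = t then sva r (t-1) else sva r j)

variable {d t : ℕ} {r : RR N m}

theorem bco_le {d : ℕ} (hr : IsRoom d r) (hdN : d ≤ N) (hd : 1 ≤ d) (i : ℕ) : bco r i ≤ m := by
  have := vco_le hr hdN (show 0 < d by omega) i
  rwa [vco_zero] at this

theorem sva_midP (hd : 2 ≤ d) (hdN : d ≤ N) (hr : IsRoom d r) (ht2 : t ≤ d - 2) (j : ℕ) :
    sva (midP N m t r) j
      = if j = t - 1 then sva r t else if j = t then sva r (t-1) else sva r j := by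
  have hN : 0 < N := by omega
  unfold midP
  rw [sva_mkR (fun j _ => by split_ifs <;> exact sva_lt r _ hN)]
  split
  · rfl
  · next h =>
    rw [if_neg (by omega), if_neg (by omega)]
    unfold sva
    rw [dif_neg (by omega)]

theorem bco_midP (hd : 2 ≤ d) (hdN : d ≤ N) (hr : IsRoom d r) (i : ℕ) :
    bco (midP N m t r) i = bco r i := by
  unfold midP
  rw [bco_mkR (fun i _ => ⟨bco_nonneg r i, bco_le hr hdN (by omega) i⟩)]
  split
  · rfl
  · next h => rw [bco_eq_zero_of_ge r (by omega)]

theorem mid_swapset (hd : 2 ≤ d) (hdN : d ≤ N) (hr : IsRoom d r) (ht1 : 1 ≤ t)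
    (ht2 : t ≤ d - 2) {k : ℕ} (hkt : k ≠ t) (p : ℕ → Prop) :
    (∃ j < k, p (sva (midP N m t r) j)) ↔ (∃ j < k, p (sva r j)) := by
  constructor
  · rintro ⟨j, hj, hpj⟩
    rw [sva_midP hd hdN hr ht2] at hpj
    split_ifs at hpj with h1 h2
    · exact ⟨t, by omega, hpj⟩
    · exact ⟨t-1, by omega, hpj⟩
    · exact ⟨j, hj, hpj⟩
  · rintro ⟨j, hj, hpj⟩
    by_cases h1 : j = t - 1
    · refine ⟨t, by omega, ?_⟩
      rw [sva_midP hd hdN hr ht2, if_neg (by omega), if_pos rfl]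
      exact h1 ▸ hpj
    · by_cases h2 : j = t
      · refine ⟨t-1, by omega, ?_⟩
        rw [sva_midP hd hdN hr ht2, if_pos rfl]
        exact h2 ▸ hpj
      · refine ⟨j, hj, ?_⟩
        rw [sva_midP hd hdN hr ht2, if_neg h1, if_neg h2]
        exact hpj

theorem vco_midP_ne (hd : 2 ≤ d) (hdN : d ≤ N) (hr : IsRoom d r) (ht1 : 1 ≤ t)
    (ht2 : t ≤ d - 2) {k : ℕ} (hkt : k ≠ t) (i : ℕ) :
    vco (midP N m t r) k i = vco r k i := by
  unfold vco
  rw [bco_midP hd hdN hr,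
    if_congr (mid_swapset hd hdN hr ht1 ht2 hkt (fun v => v + 1 = i)) rfl rfl,
    if_congr (mid_swapset hd hdN hr ht1 ht2 hkt (fun v => v = i)) rfl rfl]

theorem vco_midP_t (hd : 2 ≤ d) (hdN : d ≤ N) (hr : IsRoom d r) (ht1 : 1 ≤ t)
    (ht2 : t ≤ d - 2) (i : ℕ) :
    vco (midP N m t r) t i = vco r (t-1) i + (if sva r t + 1 = i then 1 else 0)
      - (if sva r t = i then 1 else 0) := by
  classical
  have key : ∀ p : ℕ → Prop, (∃ j < t, p (sva (midP N m t r) j)) ↔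
      ((∃ j < t - 1, p (sva r j)) ∨ p (sva r t)) := by
    intro p
    constructor
    · rintro ⟨j, hj, hpj⟩
      rw [sva_midP hd hdN hr ht2] at hpj
      split_ifs at hpj with h1 h2
      · exact Or.inr hpj
      · omega
      · exact Or.inl ⟨j, by omega, hpj⟩
    · rintro (⟨j, hj, hpj⟩ | hp)
      · refine ⟨j, by omega, ?_⟩
        rw [sva_midP hd hdN hr ht2, if_neg (by omega), if_neg (by omega)]
        exact hpj
      · refine ⟨t-1, by omega, ?_⟩
        rw [sva_midP hd hdN hr ht2, if_pos rfl]
        exact hp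
  have hinj := hr.2.2.2.2.1
  unfold vco
  rw [bco_midP hd hdN hr,
    if_congr (key (fun v => v + 1 = i)) rfl rfl, if_congr (key (fun v => v = i)) rfl rfl,
    ite_or_split, ite_or_split]
  · ring
  · rintro ⟨⟨j, hj, hji⟩, hti⟩
    have := hinj j t (by omega) (by omega) (by omega)
    omega
  · rintro ⟨⟨j, hj, hji⟩, hti⟩
    have := hinj j t (by omega) (by omega) (by omega)
    omega

theorem mid_main (hsp : Sper N m ℓ) (hd : 2 ≤ d) (hdN : d ≤ N) (hr : IsRoom d r)
    (ht1 : 1 ≤ t) (ht2 : t ≤ d - 2)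
    (hdoor : ((range d).erase t).image (lb ℓ r) = range (d-1)) :
    IsRoom d (midP N m t r) ∧
      ((range d).erase t).image (lb ℓ (midP N m t r)) = range (d-1) := by
  classical
  have hinj := hr.2.2.2.2.1
  have hval := hr.2.2.2.1
  have hc2 : sva r t < d - 1 := by have := hval t (by omega); omega
  have hnn : ∀ i, 0 ≤ vco (midP N m t r) t i := by
    intro i
    rw [vco_midP_t hd hdN hr ht1 ht2]
    by_cases hi2 : sva r t = i
    · subst hi2
      rw [if_neg (by omega), if_pos rfl]
      -- need vco r (t-1) (sva r t) ≥ 1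
      set c2 := sva r t with hc2def
      by_cases hc : sva r (t-1) + 1 = c2
      · -- profile argument
        have hprof : ∀ k ≤ d - 1, vco r k c2
            = bco r c2 + (if t-1 < k then 1 else 0) - (if t < k then 1 else 0) := by
          intro k hk
          unfold vco
          rw [if_congr (show (∃ j < k, sva r j + 1 = c2) ↔ t - 1 < k from ?_) rfl rfl,
            if_congr (ex_step_iff hr (show t < d - 1 by omega) rfl hk) rfl rfl]
          constructor
          · rintro ⟨j, hj, hji⟩
            have := hinj j (t-1) (by omega) (by omega) (by omega)
            omega
          · intro h
            exact ⟨t-1, h, hc⟩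
        by_contra hneg
        push_neg at hneg
        have h1 := hprof (t-1) (by omega)
        rw [if_neg (by omega), if_neg (by omega)] at h1
        have hb0 : bco r c2 = 0 := by
          have := hr.2.2.2.2.2 (t-1) (by omega) c2
          omega
        obtain ⟨k₀, hk₀d, hk₀t, hk₀pos⟩ := door_pos ℓ hsp hdN hr hdoor hc2
        rw [hprof k₀ (by omega), hb0] at hk₀pos
        split_ifs at hk₀pos <;> omega
      · have e1 := vco_succ hr (show t - 1 < d - 1 by omega) c2
        have e2 := vco_succ hr (show t < d - 1 by omega) c2
        rw [show t - 1 + 1 = t by omega] at e1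
        rw [if_neg hc, if_neg (by
          intro hcc
          have := hinj (t-1) t (by omega) (by omega) hcc
          omega)] at e1
        rw [if_neg (by omega), if_pos rfl] at e2
        have h3 := hr.2.2.2.2.2 (t+1) (by omega) c2
        omega
    · rw [if_neg hi2]
      have h1 := hr.2.2.2.2.2 (t-1) (by omega) i
      split_ifs <;> omega
  have hroom : IsRoom d (midP N m t r) := by
    refine ⟨?_, ?_, ?_, ?_, ?_, ?_⟩
    · intro i hi; rw [bco_midP hd hdN hr]; exact hr.1 i hi
    · rw [Finset.sum_congr rfl (fun i _ => bco_midP hd hdN hr i)]; exact hr.2.1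
    · intro j hj
      rw [sva_midP hd hdN hr ht2, if_neg (by omega), if_neg (by omega)]
      exact hr.2.2.1 j hj
    · intro j hj
      rw [sva_midP hd hdN hr ht2]
      split_ifs
      · exact hval t (by omega)
      · exact hval (t-1) (by omega)
      · exact hval j hj
    · intro j j' hj hj' heq
      rw [sva_midP hd hdN hr ht2, sva_midP hd hdN hr ht2] at heq
      split_ifs at heq <;>
        first
          | omega
          | (have := hinj _ _ (by omega) (by omega) heq; omega)
    · intro k hk i
      by_cases hkt : k = t
      · subst hkt; exact hnn i
      · rw [vco_midP_ne hd hdN hr ht1 ht2 hkt]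
        exact hr.2.2.2.2.2 k hk i
  refine ⟨hroom, ?_⟩
  rw [← hdoor]
  apply Finset.image_congr
  intro k hk
  have hkt : k ≠ t := (mem_erase.1 hk).1
  unfold lb
  congr 1
  funext i
  exact vco_midP_ne hd hdN hr ht1 ht2 hkt i

end midpivot

section updown

noncomputable def upP (N m d : ℕ) (r : RR N m) : RR N m :=
  mkR N m (fun i => vco r 1 i)
    (fun j => if j < d - 2 then sva r (j+1) else if j = d - 2 then sva r 0 else 0)

noncomputable def downP (N m d : ℕ) (r : RR N m) : RR N m :=
  mkR N m (fun i => vco r 0 i + (if sva r (d-2) = i then 1 else 0)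
      - (if sva r (d-2) + 1 = i then 1 else 0))
    (fun j => if j = 0 then sva r (d-2) else if j < d - 1 then sva r (j-1) else 0)

variable {d : ℕ} {r : RR N m}

theorem vco_one (hd : 2 ≤ d) (hr : IsRoom d r) (i : ℕ) :
    vco r 1 i = bco r i + (if sva r 0 + 1 = i then 1 else 0)
      - (if sva r 0 = i then 1 else 0) := by
  have h := vco_succ hr (show 0 < d - 1 by omega) i
  rwa [vco_zero] at h

theorem sva_upP (hd : 2 ≤ d) (hdN : d ≤ N) (j : ℕ) :
    sva (upP N m d r) j
      = if j < d - 2 then sva r (j+1) else if j = d - 2 then sva r 0 else 0 := by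
  have hN : 0 < N := by omega
  unfold upP
  rw [sva_mkR (fun j _ => by split_ifs <;> first | exact sva_lt r _ hN | omega)]
  split
  · rfl
  · next h => rw [if_neg (by omega), if_neg (by omega)]

theorem bco_upP (hd : 2 ≤ d) (hdN : d ≤ N) (hr : IsRoom d r) (i : ℕ) :
    bco (upP N m d r) i = vco r 1 i := by
  unfold upP
  rw [bco_mkR (fun i _ => ⟨hr.2.2.2.2.2 1 (by omega) i, vco_le hr hdN (by omega) i⟩)]
  split
  · rfl
  · next h => rw [vco_supp hr (by omega) (by omega)]

theorem vco_upP_lt (hd : 2 ≤ d) (hdN : d ≤ N) (hr : IsRoom d r) {k : ℕ} (hk : k ≤ d - 2)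
    (i : ℕ) : vco (upP N m d r) k i = vco r (k+1) i := by
  classical
  have hinj := hr.2.2.2.2.1
  have h1 : ∀ p : ℕ → Prop, ((∃ j < k, p (sva (upP N m d r) j)) ↔
      (∃ j, 1 ≤ j ∧ j < k + 1 ∧ p (sva r j))) := by
    intro p
    constructor
    · rintro ⟨j, hj, hpj⟩
      rw [sva_upP hd hdN, if_pos (by omega)] at hpj
      exact ⟨j+1, by omega, by omega, hpj⟩
    · rintro ⟨j, h1j, hjk, hpj⟩
      refine ⟨j-1, by omega, ?_⟩
      rw [sva_upP hd hdN, if_pos (by omega), show j-1+1 = j by omega]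
      exact hpj
  have h2 : ∀ p : ℕ → Prop, ((∃ j < k + 1, p (sva r j)) ↔
      (p (sva r 0) ∨ ∃ j, 1 ≤ j ∧ j < k + 1 ∧ p (sva r j))) := by
    intro p
    constructor
    · rintro ⟨j, hj, hpj⟩
      rcases Nat.eq_zero_or_pos j with rfl | hjp
      · exact Or.inl hpj
      · exact Or.inr ⟨j, hjp, hj, hpj⟩
    · rintro (hp | ⟨j, h1j, hjk, hpj⟩)
      · exact ⟨0, by omega, hp⟩
      · exact ⟨j, hjk, hpj⟩
  have hR : vco r (k+1) i = bco r i
      + ((if sva r 0 + 1 = i then 1 else 0) + (if ∃ j, 1 ≤ j ∧ j < k + 1 ∧ sva r j + 1 = i then 1 else 0))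
      - ((if sva r 0 = i then 1 else 0) + (if ∃ j, 1 ≤ j ∧ j < k + 1 ∧ sva r j = i then 1 else 0)) := by
    unfold vco
    rw [if_congr (h2 (fun v => v + 1 = i)) rfl rfl, if_congr (h2 (fun v => v = i)) rfl rfl,
      ite_or_split, ite_or_split]
    · rintro ⟨hp0, j, h1j, hjk, hpj⟩
      have := hinj j 0 (by omega) (by omega) (by omega)
      omega
    · rintro ⟨hp0, j, h1j, hjk, hpj⟩
      have := hinj j 0 (by omega) (by omega) (by omega)
      omega
  conv_lhs => unfold vco
  rw [if_congr (h1 (fun v => v + 1 = i)) rfl rfl, if_congr (h1 (fun v => v = i)) rfl rfl,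
    bco_upP hd hdN hr, vco_one hd hr, hR]
  ring

theorem vco_upP_top (hd : 2 ≤ d) (hdN : d ≤ N) (hr : IsRoom d r) (i : ℕ) :
    vco (upP N m d r) (d-1) i = vco r (d-1) i + (if sva r 0 + 1 = i then 1 else 0)
      - (if sva r 0 = i then 1 else 0) := by
  classical
  have hset : ∀ p : ℕ → Prop, ((∃ j < d - 1, p (sva (upP N m d r) j)) ↔
      (∃ j < d - 1, p (sva r j))) := by
    intro p
    constructor
    · rintro ⟨j, hj, hpj⟩
      rw [sva_upP hd hdN] at hpj
      split_ifs at hpj with hlt heq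
      · exact ⟨j+1, by omega, hpj⟩
      · exact ⟨0, by omega, hpj⟩
      · omega
    · rintro ⟨j, hj, hpj⟩
      rcases Nat.eq_zero_or_pos j with rfl | hjp
      · refine ⟨d-2, by omega, ?_⟩
        rw [sva_upP hd hdN, if_neg (by omega), if_pos rfl]
        exact hpj
      · refine ⟨j-1, by omega, ?_⟩
        rw [sva_upP hd hdN, if_pos (by omega), show j-1+1 = j by omega]
        exact hpj
  unfold vco
  rw [if_congr (hset (fun v => v + 1 = i)) rfl rfl, if_congr (hset (fun v => v = i)) rfl rfl,
    bco_upP hd hdN hr, vco_one hd hr]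
  ring

theorem upP_top_nonneg (hsp : Sper N m ℓ) (hd : 2 ≤ d) (hdN : d ≤ N) (hr : IsRoom d r)
    (hdoor : ((range d).erase 0).image (lb ℓ r) = range (d-1)) (i : ℕ) :
    0 ≤ vco (upP N m d r) (d-1) i := by
  classical
  rw [vco_upP_top hd hdN hr]
  by_cases hi : sva r 0 = i
  · subst hi
    rw [if_neg (by omega), if_pos rfl]
    set c := sva r 0 with hc0
    have hc : c < d - 1 := by have := hr.2.2.2.1 0 (by omega); omega
    by_cases hin : ∃ j < d - 1, sva r j + 1 = c
    · have h1 : vco r 1 c = bco r c - 1 := by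
        rw [vco_one hd hr, if_neg (by omega), if_pos rfl]
        ring
      have h1' := hr.2.2.2.2.2 1 (by omega) c
      have hfull : vco r (d-1) c = bco r c := by
        unfold vco
        rw [if_pos hin, if_pos (⟨0, by omega, rfl⟩ : ∃ j < d-1, sva r j = c)]
        ring
      omega
    · have hprof : ∀ k ≤ d - 1, vco r k c = bco r c - (if 0 < k then 1 else 0) := by
        intro k hk
        unfold vco
        rw [if_neg (fun ⟨j, hj, hji⟩ => hin ⟨j, by omega, hji⟩),
          if_congr (ex_step_iff hr (show (0:ℕ) < d - 1 by omega) rfl hk) rfl rfl]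
        ring
      obtain ⟨k₀, hk₀d, hk₀0, hk₀pos⟩ := door_pos ℓ hsp hdN hr hdoor hc
      rw [hprof k₀ (by omega), if_pos (by omega)] at hk₀pos
      rw [hprof (d-1) le_rfl, if_pos (by omega)]
      omega
  · rw [if_neg hi]
    have := hr.2.2.2.2.2 (d-1) (by omega) i
    split_ifs <;> omega

theorem upP_isRoom (hsp : Sper N m ℓ) (hd : 2 ≤ d) (hdN : d ≤ N) (hr : IsRoom d r)
    (hdoor : ((range d).erase 0).image (lb ℓ r) = range (d-1)) :
    IsRoom d (upP N m d r) := by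
  have hinj := hr.2.2.2.2.1
  have hval := hr.2.2.2.1
  refine ⟨?_, ?_, ?_, ?_, ?_, ?_⟩
  · intro i hi
    rw [bco_upP hd hdN hr]
    exact vco_supp hr (by omega) hi
  · rw [Finset.sum_congr rfl (fun i _ => bco_upP hd hdN hr i)]
    exact vco_sum hr hdN (by omega)
  · intro j hj
    rw [sva_upP hd hdN, if_neg (by omega), if_neg (by omega)]
  · intro j hj
    rw [sva_upP hd hdN]
    split_ifs
    · exact hval (j+1) (by omega)
    · exact hval 0 (by omega)
    · omega
  · intro j j' hj hj' heq
    rw [sva_upP hd hdN, sva_upP hd hdN] at heq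
    split_ifs at heq <;>
      first
        | omega
        | (have := hinj _ _ (by omega) (by omega) heq; omega)
  · intro k hk i
    by_cases hkd : k ≤ d - 2
    · rw [vco_upP_lt hd hdN hr hkd]
      exact hr.2.2.2.2.2 (k+1) (by omega) i
    · rw [show k = d - 1 by omega]
      exact upP_top_nonneg ℓ hsp hd hdN hr hdoor i

theorem erase_zero_range (d : ℕ) :
    (range d).erase 0 = (range (d-1)).image (fun k => k + 1) := by
  ext x
  simp only [mem_erase, mem_range, mem_image]
  constructor
  · intro ⟨h1, h2⟩; exact ⟨x-1, by omega, by omega⟩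
  · rintro ⟨k, hk, rfl⟩; omega

theorem erase_last_range (d : ℕ) (hd : 1 ≤ d) : (range d).erase (d-1) = range (d-1) := by
  ext x
  simp only [mem_erase, mem_range]
  omega

theorem upP_door (hsp : Sper N m ℓ) (hd : 2 ≤ d) (hdN : d ≤ N) (hr : IsRoom d r)
    (hdoor : ((range d).erase 0).image (lb ℓ r) = range (d-1)) :
    ((range d).erase (d-1)).image (lb ℓ (upP N m d r)) = range (d-1) := by
  rw [erase_last_range d (by omega)]
  have hlb : ∀ k ∈ range (d-1), lb ℓ (upP N m d r) k = lb ℓ r (k+1) := by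
    intro k hk
    unfold lb
    congr 1
    funext i
    exact vco_upP_lt hd hdN hr (by have := mem_range.1 hk; omega) i
  rw [Finset.image_congr hlb, show (fun k => lb ℓ r (k+1)) = (lb ℓ r) ∘ (fun k => k + 1) from rfl,
    ← Finset.image_image, ← erase_zero_range, hdoor]

theorem sva_downP (hd : 2 ≤ d) (hdN : d ≤ N) (j : ℕ) :
    sva (downP N m d r) j
      = if j = 0 then sva r (d-2) else if j < d - 1 then sva r (j-1) else 0 := by
  have hN : 0 < N := by omega
  unfold downP
  rw [sva_mkR (fun j _ => by split_ifs <;> first | exact sva_lt r _ hN | omega)]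
  split
  · rfl
  · next h => rw [if_neg (by omega), if_neg (by omega)]

theorem down_base_pos (hsp : Sper N m ℓ) (hd : 2 ≤ d) (hdN : d ≤ N) (hr : IsRoom d r)
    (hdoor : ((range d).erase (d-1)).image (lb ℓ r) = range (d-1))
    (hnbd : ¬(sva r (d-2) = d - 2 ∧ bco r (d-1) = 0)) :
    1 ≤ vco r 0 (sva r (d-2) + 1) := by
  classical
  have hinj := hr.2.2.2.2.1
  have hval := hr.2.2.2.1
  set c := sva r (d-2) with hc0
  have hc : c < d - 1 := by have := hval (d-2) (by omega); omega
  rw [vco_zero]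
  by_cases hout : ∃ j < d - 1, sva r j = c + 1
  · obtain ⟨j₂, hj₂, hj₂v⟩ := hout
    have hstep : vco r (j₂+1) (c+1) = bco r (c+1) - 1 := by
      unfold vco
      rw [if_neg, if_pos ⟨j₂, by omega, hj₂v⟩]
      · ring
      · rintro ⟨j, hj, hji⟩
        have hje : j = d - 2 := hinj j (d-2) (by omega) (by omega) (by omega)
        have hj₂e : j₂ = d - 2 := by omega
        rw [hj₂e] at hj₂v
        omega
    have := hr.2.2.2.2.2 (j₂+1) (by omega) (c+1)
    omega
  · have hprof : ∀ k ≤ d - 1, vco r k (c+1)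
        = bco r (c+1) + (if d - 2 < k then 1 else 0) := by
      intro k hk
      unfold vco
      rw [if_congr (show (∃ j < k, sva r j + 1 = c + 1) ↔ d - 2 < k from ?_) rfl rfl,
        if_neg (show ¬(∃ j < k, sva r j = c + 1) from fun ⟨j, hj, hji⟩ =>
          hout ⟨j, by omega, hji⟩)]
      · ring
      constructor
      · rintro ⟨j, hj, hji⟩
        have : j = d - 2 := hinj j (d-2) (by omega) (by omega) (by omega)
        omega
      · intro h
        exact ⟨d-2, h, by omega⟩
    by_contra hneg
    push_neg at hneg
    have hb0 : bco r (c+1) = 0 := by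
      have := bco_nonneg r (c+1)
      omega
    by_cases hcd : c + 1 < d - 1
    · obtain ⟨k₀, hk₀d, hk₀t, hk₀pos⟩ := door_pos ℓ hsp hdN hr hdoor hcd
      rw [hprof k₀ (by omega), hb0, if_neg (by omega)] at hk₀pos
      omega
    · have hce : c + 1 = d - 1 := by omega
      exact hnbd ⟨by omega, by rw [← hce]; exact hb0⟩

theorem down_spec (hsp : Sper N m ℓ) (hd : 2 ≤ d) (hdN : d ≤ N) (hr : IsRoom d r)
    (hdoor : ((range d).erase (d-1)).image (lb ℓ r) = range (d-1))
    (hnbd : ¬(sva r (d-2) = d - 2 ∧ bco r (d-1) = 0)) :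
    ∀ i, i < N → (0 ≤ vco r 0 i + (if sva r (d-2) = i then 1 else 0)
      - (if sva r (d-2) + 1 = i then 1 else 0) ∧
      vco r 0 i + (if sva r (d-2) = i then 1 else 0)
      - (if sva r (d-2) + 1 = i then 1 else 0) ≤ m) := by
  classical
  have hbp := down_base_pos ℓ hsp hd hdN hr hdoor hnbd
  have hnn : ∀ i, 0 ≤ vco r 0 i + (if sva r (d-2) = i then 1 else 0)
      - (if sva r (d-2) + 1 = i then 1 else 0) := by
    intro i
    have h0 := hr.2.2.2.2.2 0 (by omega) i
    by_cases hi : sva r (d-2) + 1 = i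
    · rw [if_pos hi, if_neg (by omega), ← hi]
      omega
    · rw [if_neg hi]
      split_ifs <;> omega
  intro i hi
  refine ⟨hnn i, ?_⟩
  have hsum : (∑ i ∈ range N, (vco r 0 i + (if sva r (d-2) = i then 1 else 0)
      - (if sva r (d-2) + 1 = i then 1 else 0))) = m := by
    have hc : sva r (d-2) < d - 1 := by have := hr.2.2.2.1 (d-2) (by omega); omega
    have h1 : (∑ i ∈ range N, (if sva r (d-2) = i then (1:ℤ) else 0)) = 1 := by
      rw [Finset.sum_ite_eq (range N) (sva r (d-2)) (fun _ => (1:ℤ)),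
        if_pos (mem_range.2 (by omega))]
    have h2 : (∑ i ∈ range N, (if sva r (d-2) + 1 = i then (1:ℤ) else 0)) = 1 := by
      rw [Finset.sum_ite_eq (range N) (sva r (d-2) + 1) (fun _ => (1:ℤ)),
        if_pos (mem_range.2 (by omega))]
    rw [Finset.sum_sub_distrib, Finset.sum_add_distrib, vco_sum hr hdN (by omega), h1, h2]
    ring
  calc vco r 0 i + (if sva r (d-2) = i then 1 else 0)
      - (if sva r (d-2) + 1 = i then 1 else 0)
      ≤ ∑ i ∈ range N, (vco r 0 i + (if sva r (d-2) = i then 1 else 0)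
        - (if sva r (d-2) + 1 = i then 1 else 0)) :=
        Finset.single_le_sum (fun j _ => hnn j) (mem_range.2 hi)
    _ = m := hsum

theorem bco_downP (hsp : Sper N m ℓ) (hd : 2 ≤ d) (hdN : d ≤ N) (hr : IsRoom d r)
    (hdoor : ((range d).erase (d-1)).image (lb ℓ r) = range (d-1))
    (hnbd : ¬(sva r (d-2) = d - 2 ∧ bco r (d-1) = 0)) (i : ℕ) :
    bco (downP N m d r) i = vco r 0 i + (if sva r (d-2) = i then 1 else 0)
      - (if sva r (d-2) + 1 = i then 1 else 0) := by
  unfold downP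
  rw [bco_mkR (down_spec ℓ hsp hd hdN hr hdoor hnbd)]
  split
  · rfl
  · next h =>
    have hc : sva r (d-2) < d - 1 := by have := hr.2.2.2.1 (d-2) (by omega); omega
    rw [vco_supp hr (by omega) (by omega), if_neg (by omega), if_neg (by omega)]
    ring

theorem vco_downP_pos (hsp : Sper N m ℓ) (hd : 2 ≤ d) (hdN : d ≤ N) (hr : IsRoom d r)
    (hdoor : ((range d).erase (d-1)).image (lb ℓ r) = range (d-1))
    (hnbd : ¬(sva r (d-2) = d - 2 ∧ bco r (d-1) = 0)) {k : ℕ} (hk1 : 1 ≤ k)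
    (hk2 : k ≤ d - 1) (i : ℕ) :
    vco (downP N m d r) k i = vco r (k-1) i := by
  classical
  have hinj := hr.2.2.2.2.1
  have hsplit : ∀ p : ℕ → Prop, ((∃ j < k, p (sva (downP N m d r) j)) ↔
      (p (sva r (d-2)) ∨ ∃ j, j < k - 1 ∧ p (sva r j))) := by
    intro p
    constructor
    · rintro ⟨j, hj, hpj⟩
      rw [sva_downP hd hdN] at hpj
      split_ifs at hpj with h1 h2
      · exact Or.inl hpj
      · exact Or.inr ⟨j-1, by omega, hpj⟩
      · omega
    · rintro (hp | ⟨j, hj, hpj⟩)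
      · refine ⟨0, by omega, ?_⟩
        rw [sva_downP hd hdN, if_pos rfl]
        exact hp
      · refine ⟨j+1, by omega, ?_⟩
        rw [sva_downP hd hdN, if_neg (by omega), if_pos (by omega)]
        simpa using hpj
  have hdis1 : ¬(sva r (d-2) + 1 = i ∧ ∃ j, j < k - 1 ∧ sva r j + 1 = i) := by
    rintro ⟨h1, j, hj, hji⟩
    have : j = d - 2 := hinj j (d-2) (by omega) (by omega) (by omega)
    omega
  have hdis2 : ¬(sva r (d-2) = i ∧ ∃ j, j < k - 1 ∧ sva r j = i) := by
    rintro ⟨h1, j, hj, hji⟩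
    have : j = d - 2 := hinj j (d-2) (by omega) (by omega) (by omega)
    omega
  have hL : vco (downP N m d r) k i
      = (vco r 0 i + (if sva r (d-2) = i then 1 else 0)
          - (if sva r (d-2) + 1 = i then 1 else 0))
        + ((if sva r (d-2) + 1 = i then 1 else 0)
            + (if ∃ j, j < k - 1 ∧ sva r j + 1 = i then 1 else 0))
        - ((if sva r (d-2) = i then 1 else 0)
            + (if ∃ j, j < k - 1 ∧ sva r j = i then 1 else 0)) := by
    conv_lhs => unfold vco
    rw [bco_downP ℓ hsp hd hdN hr hdoor hnbd,
      if_congr (hsplit (fun v => v + 1 = i)) rfl rfl,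
      if_congr (hsplit (fun v => v = i)) rfl rfl,
      ite_or_split hdis1, ite_or_split hdis2]
  have hR : vco r (k-1) i = bco r i + (if ∃ j, j < k - 1 ∧ sva r j + 1 = i then 1 else 0)
      - (if ∃ j, j < k - 1 ∧ sva r j = i then 1 else 0) := rfl
  rw [hL, hR, vco_zero]
  ring

theorem downP_isRoom (hsp : Sper N m ℓ) (hd : 2 ≤ d) (hdN : d ≤ N) (hr : IsRoom d r)
    (hdoor : ((range d).erase (d-1)).image (lb ℓ r) = range (d-1))
    (hnbd : ¬(sva r (d-2) = d - 2 ∧ bco r (d-1) = 0)) :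
    IsRoom d (downP N m d r) := by
  have hinj := hr.2.2.2.2.1
  have hval := hr.2.2.2.1
  have hc : sva r (d-2) < d - 1 := by have := hval (d-2) (by omega); omega
  refine ⟨?_, ?_, ?_, ?_, ?_, ?_⟩
  · intro i hi
    rw [bco_downP ℓ hsp hd hdN hr hdoor hnbd, vco_supp hr (by omega) (by omega),
      if_neg (by omega), if_neg (by omega)]
    ring
  · rw [Finset.sum_congr rfl (fun i _ => bco_downP ℓ hsp hd hdN hr hdoor hnbd i)]
    have h1 : (∑ i ∈ range N, (if sva r (d-2) = i then (1:ℤ) else 0)) = 1 := by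
      rw [Finset.sum_ite_eq (range N) (sva r (d-2)) (fun _ => (1:ℤ)),
        if_pos (mem_range.2 (by omega))]
    have h2 : (∑ i ∈ range N, (if sva r (d-2) + 1 = i then (1:ℤ) else 0)) = 1 := by
      rw [Finset.sum_ite_eq (range N) (sva r (d-2) + 1) (fun _ => (1:ℤ)),
        if_pos (mem_range.2 (by omega))]
    rw [Finset.sum_sub_distrib, Finset.sum_add_distrib, vco_sum hr hdN (by omega), h1, h2]
    ring
  · intro j hj
    rw [sva_downP hd hdN, if_neg (by omega), if_neg (by omega)]
  · intro j hj
    rw [sva_downP hd hdN]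
    split_ifs <;> first | omega | exact hval (j-1) (by omega)
  · intro j j' hj hj' heq
    rw [sva_downP hd hdN, sva_downP hd hdN] at heq
    split_ifs at heq <;>
      first
        | omega
        | (have := hinj _ _ (by omega) (by omega) heq; omega)
  · intro k hk i
    rcases Nat.eq_zero_or_pos k with rfl | hk1
    · rw [vco_zero]
      exact bco_nonneg _ i
    · rw [vco_downP_pos ℓ hsp hd hdN hr hdoor hnbd hk1 (by omega)]
      exact hr.2.2.2.2.2 (k-1) (by omega) i

theorem downP_door (hsp : Sper N m ℓ) (hd : 2 ≤ d) (hdN : d ≤ N) (hr : IsRoom d r)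
    (hdoor : ((range d).erase (d-1)).image (lb ℓ r) = range (d-1))
    (hnbd : ¬(sva r (d-2) = d - 2 ∧ bco r (d-1) = 0)) :
    ((range d).erase 0).image (lb ℓ (downP N m d r)) = range (d-1) := by
  rw [erase_zero_range d, Finset.image_image]
  have hlb : ∀ k ∈ range (d-1), ((lb ℓ (downP N m d r)) ∘ (fun k => k + 1)) k = lb ℓ r k := by
    intro k hk
    have hk' := mem_range.1 hk
    show lb ℓ (downP N m d r) (k+1) = lb ℓ r k
    unfold lb
    congr 1
    funext i
    rw [vco_downP_pos ℓ hsp hd hdN hr hdoor hnbd (by omega) (by omega)]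
    norm_num
  rw [Finset.image_congr hlb]
  conv_lhs => rw [← erase_last_range d (by omega)]
  exact hdoor

end updown

section assemble

variable {d t : ℕ} {r : RR N m}

theorem noBd_upP (hsp : Sper N m ℓ) (hd : 2 ≤ d) (hdN : d ≤ N) (hr : IsRoom d r)
    (hdoor : ((range d).erase 0).image (lb ℓ r) = range (d-1)) :
    ¬(sva (upP N m d r) (d-2) = d - 2 ∧ bco (upP N m d r) (d-1) = 0) := by
  rintro ⟨h1, h2⟩
  have hroom := upP_isRoom ℓ hsp hd hdN hr hdoor
  have hfacet := (Bd_iff hd hroom (show d-1 < d by omega)).1 ⟨rfl, h1, h2⟩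
  have hzero : ∀ k < d, k ≠ 0 → vco r k (d-1) = 0 := by
    intro k hk hk0
    have := hfacet (k-1) (by omega) (by omega)
    rwa [vco_upP_lt hd hdN hr (by omega), show k-1+1 = k by omega] at this
  have := (Bd_iff hd hr (show (0:ℕ) < d by omega)).2 hzero
  omega

theorem midP_midP (hd : 2 ≤ d) (hdN : d ≤ N) (hr : IsRoom d r) (ht1 : 1 ≤ t)
    (ht2 : t ≤ d - 2) (hr' : IsRoom d (midP N m t r)) :
    midP N m t (midP N m t r) = r := by
  apply RR_ext
  · intro i hi
    rw [bco_midP hd hdN hr', bco_midP hd hdN hr]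
  · intro j hj
    rw [sva_midP hd hdN hr' ht2]
    split_ifs with h1 h2
    · rw [sva_midP hd hdN hr ht2, if_neg (by omega), if_pos rfl, h1]
    · rw [sva_midP hd hdN hr ht2, if_pos rfl, h2]
    · rw [sva_midP hd hdN hr ht2, if_neg h1, if_neg h2]

theorem downP_upP (hsp : Sper N m ℓ) (hd : 2 ≤ d) (hdN : d ≤ N) (hr : IsRoom d r)
    (hdoor : ((range d).erase 0).image (lb ℓ r) = range (d-1)) :
    downP N m d (upP N m d r) = r := by
  have hroomU := upP_isRoom ℓ hsp hd hdN hr hdoor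
  have hdoorU := upP_door ℓ hsp hd hdN hr hdoor
  have hnbdU := noBd_upP ℓ hsp hd hdN hr hdoor
  have hsva0 : sva (upP N m d r) (d-2) = sva r 0 := by
    rw [sva_upP hd hdN, if_neg (by omega), if_pos rfl]
  apply RR_ext
  · intro i hi
    rw [bco_downP ℓ hsp hd hdN hroomU hdoorU hnbdU, vco_zero, bco_upP hd hdN hr,
      hsva0, vco_one hd hr]
    ring
  · intro j hj
    rw [sva_downP hd hdN]
    split_ifs with h1 h2
    · rw [hsva0, h1]
    · rw [sva_upP hd hdN, if_pos (by omega), show j-1+1 = j by omega]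
    · rw [hr.2.2.1 j (by omega)]

theorem upP_downP (hsp : Sper N m ℓ) (hd : 2 ≤ d) (hdN : d ≤ N) (hr : IsRoom d r)
    (hdoor : ((range d).erase (d-1)).image (lb ℓ r) = range (d-1))
    (hnbd : ¬(sva r (d-2) = d - 2 ∧ bco r (d-1) = 0)) :
    upP N m d (downP N m d r) = r := by
  have hroomD := downP_isRoom ℓ hsp hd hdN hr hdoor hnbd
  apply RR_ext
  · intro i hi
    have h1 := vco_downP_pos ℓ hsp hd hdN hr hdoor hnbd (le_refl 1) (by omega) i
    norm_num at h1
    rw [bco_upP hd hdN hroomD, h1, vco_zero]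
  · intro j hj
    rw [sva_upP hd hdN]
    split_ifs with h1 h2
    · rw [sva_downP hd hdN, if_neg (by omega), if_pos (by omega)]
      norm_num
    · rw [sva_downP hd hdN, if_pos rfl, h2]
    · rw [hr.2.2.1 j (by omega)]

open Classical in
theorem mem_doorF {p : RR N m × ℕ} {d : ℕ} :
    p ∈ (doorF ℓ d : Finset (RR N m × ℕ)) ↔
      p.2 < d ∧ IsRoom d p.1 ∧ ((range d).erase p.2).image (lb ℓ p.1) = range (d-1) := by
  unfold doorF
  rw [Finset.mem_filter, Finset.mem_product]
  simp only [Finset.mem_univ, true_and, Finset.mem_range]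

noncomputable def pivot (N m d : ℕ) : RR N m × ℕ → RR N m × ℕ :=
  fun p => if p.2 = 0 then (upP N m d p.1, d-1)
    else if p.2 = d-1 then (downP N m d p.1, 0)
    else (midP N m p.2 p.1, p.2)

open Classical in
theorem idoor_even (hsp : Sper N m ℓ) (hd : 2 ≤ d) (hdN : d ≤ N) :
    (((doorF ℓ d : Finset (RR N m × ℕ))).filter (fun p => ¬ Bd d p)).card % 2 = 0 := by
  classical
  apply even_card_of_involution _ (pivot N m d)
  rintro ⟨r, t⟩ hp
  rw [Finset.mem_filter, mem_doorF] at hp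
  obtain ⟨⟨htd, hr, hdoor⟩, hnbd⟩ := hp
  by_cases ht0 : t = 0
  · subst ht0
    have hpiv : pivot N m d (r, 0) = (upP N m d r, d-1) := by
      unfold pivot; simp
    refine ⟨?_, ?_, ?_⟩
    · rw [hpiv, Finset.mem_filter, mem_doorF]
      refine ⟨⟨by omega, upP_isRoom ℓ hsp hd hdN hr hdoor, upP_door ℓ hsp hd hdN hr hdoor⟩, ?_⟩
      rintro ⟨-, hb1, hb2⟩
      exact noBd_upP ℓ hsp hd hdN hr hdoor ⟨hb1, hb2⟩
    · rw [hpiv]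
      unfold pivot
      rw [if_neg (show ¬(((upP N m d r, d-1) : RR N m × ℕ).2 = 0) by simp; omega),
        if_pos (show ((upP N m d r, d-1) : RR N m × ℕ).2 = d-1 from rfl)]
      rw [Prod.mk.injEq]
      exact ⟨downP_upP ℓ hsp hd hdN hr hdoor, rfl⟩
    · rw [hpiv]
      intro h
      have := congrArg Prod.snd h
      simp at this
      omega
  · by_cases htd1 : t = d - 1
    · subst htd1
      have hnbd' : ¬(sva r (d-2) = d - 2 ∧ bco r (d-1) = 0) := by
        intro hb
        exact hnbd ⟨rfl, hb.1, hb.2⟩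
      have hpiv : pivot N m d (r, d-1) = (downP N m d r, 0) := by
        unfold pivot
        rw [if_neg (show ¬((r, d-1).2 = 0) by simp; omega), if_pos rfl]
      refine ⟨?_, ?_, ?_⟩
      · rw [hpiv, Finset.mem_filter, mem_doorF]
        refine ⟨⟨by omega, downP_isRoom ℓ hsp hd hdN hr hdoor hnbd',
          downP_door ℓ hsp hd hdN hr hdoor hnbd'⟩, ?_⟩
        rintro ⟨hb0, -⟩
        simp at hb0
        omega
      · rw [hpiv]
        unfold pivot
        rw [if_pos rfl, Prod.mk.injEq]
        exact ⟨upP_downP ℓ hsp hd hdN hr hdoor hnbd', rfl⟩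
      · rw [hpiv]
        intro h
        have := congrArg Prod.snd h
        simp at this
        omega
    · have ht1 : 1 ≤ t := by omega
      have ht2 : t ≤ d - 2 := by omega
      obtain ⟨hroomM, hdoorM⟩ := mid_main ℓ hsp hd hdN hr ht1 ht2 hdoor
      have hpiv : pivot N m d (r, t) = (midP N m t r, t) := by
        unfold pivot
        rw [if_neg (show ¬((r, t).2 = 0) from ht0), if_neg (show ¬((r, t).2 = d-1) from htd1)]
      refine ⟨?_, ?_, ?_⟩
      · rw [hpiv, Finset.mem_filter, mem_doorF]
        refine ⟨⟨htd, hroomM, hdoorM⟩, ?_⟩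
        rintro ⟨hb0, -⟩
        simp at hb0
        omega
      · rw [hpiv]
        unfold pivot
        rw [if_neg (show ¬((midP N m t r, t) : RR N m × ℕ).2 = 0 from ht0),
          if_neg (show ¬((midP N m t r, t) : RR N m × ℕ).2 = d-1 from htd1),
          Prod.mk.injEq]
        exact ⟨midP_midP hd hdN hr ht1 ht2 hroomM, rfl⟩
      · rw [hpiv]
        intro h
        have hre : midP N m t r = r := congrArg Prod.fst h
        have hsv := congrArg (fun x => sva x (t-1)) hre
        beta_reduce at hsv
        rw [sva_midP hd hdN hr ht2, if_pos rfl] at hsv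
        have := hr.2.2.2.2.1 t (t-1) (by omega) (by omega) hsv
        omega

end assemble

section boundary

variable {d : ℕ} {r : RR N m}

/-- forget the last step of a boundary room -/
def phi (d : ℕ) (r : RR N m) : RR N m :=
  (r.1, fun j => if (j:ℕ) < d - 2 then r.2 j else ⟨0, lt_of_le_of_lt (Nat.zero_le _) j.2⟩)

/-- append the step `d-2` on top of a `(d-1)`-room -/
def psi (d : ℕ) (hdN : d ≤ N) (hd : 2 ≤ d) (r : RR N m) : RR N m :=
  (r.1, fun j => if (j:ℕ) = d - 2 then ⟨d-2, by omega⟩ else r.2 j)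

theorem bco_phi (i : ℕ) : bco (phi d r) i = bco r i := rfl

theorem sva_phi (hd : 2 ≤ d) (hdN : d ≤ N) (j : ℕ) :
    sva (phi d r) j = if j < d - 2 then sva r j else 0 := by
  unfold sva phi
  split
  · next h =>
    simp only
    rw [apply_ite Fin.val]
  · next h => rw [if_neg (by omega)]

theorem sva_psi (hd : 2 ≤ d) (hdN : d ≤ N) (j : ℕ) :
    sva (psi d hdN hd r) j = if j = d - 2 then d - 2 else sva r j := by
  unfold sva psi
  split
  · next h =>
    simp only
    rw [apply_ite Fin.val]
  · next h => rw [if_neg (by omega)]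

theorem bco_psi (hdN : d ≤ N) (hd : 2 ≤ d) (i : ℕ) : bco (psi d hdN hd r) i = bco r i := rfl

theorem vco_phi (hd : 2 ≤ d) (hdN : d ≤ N) {k : ℕ} (hk : k ≤ d - 2) (i : ℕ) :
    vco (phi d r) k i = vco r k i := by
  unfold vco
  rw [bco_phi]
  have h1 : ∀ p : ℕ → Prop, ((∃ j < k, p (sva (phi d r) j)) ↔ (∃ j < k, p (sva r j))) := by
    intro p
    constructor
    · rintro ⟨j, hj, hpj⟩
      rw [sva_phi hd hdN, if_pos (by omega)] at hpj
      exact ⟨j, hj, hpj⟩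
    · rintro ⟨j, hj, hpj⟩
      refine ⟨j, hj, ?_⟩
      rw [sva_phi hd hdN, if_pos (by omega)]
      exact hpj
  rw [if_congr (h1 (fun v => v + 1 = i)) rfl rfl, if_congr (h1 (fun v => v = i)) rfl rfl]

theorem vco_psi (hd : 2 ≤ d) (hdN : d ≤ N) {k : ℕ} (hk : k ≤ d - 2) (i : ℕ) :
    vco (psi d hdN hd r) k i = vco r k i := by
  unfold vco
  rw [bco_psi]
  have h1 : ∀ p : ℕ → Prop,
      ((∃ j < k, p (sva (psi d hdN hd r) j)) ↔ (∃ j < k, p (sva r j))) := by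
    intro p
    constructor
    · rintro ⟨j, hj, hpj⟩
      rw [sva_psi hd hdN, if_neg (by omega)] at hpj
      exact ⟨j, hj, hpj⟩
    · rintro ⟨j, hj, hpj⟩
      refine ⟨j, hj, ?_⟩
      rw [sva_psi hd hdN, if_neg (by omega)]
      exact hpj
  rw [if_congr (h1 (fun v => v + 1 = i)) rfl rfl, if_congr (h1 (fun v => v = i)) rfl rfl]

theorem phi_full (hsp : Sper N m ℓ) (hd : 2 ≤ d) (hdN : d ≤ N) (hr : IsRoom d r)
    (hdoor : ((range d).erase (d-1)).image (lb ℓ r) = range (d-1))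
    (hs : sva r (d-2) = d - 2) (hb : bco r (d-1) = 0) :
    IsRoom (d-1) (phi d r) ∧ (range (d-1)).image (lb ℓ (phi d r)) = range (d-1) := by
  have hinj := hr.2.2.2.2.1
  have hval := hr.2.2.2.1
  have hvlt : ∀ j, j < d - 2 → sva r j < d - 2 := by
    intro j hj
    have h1 := hval j (by omega)
    have h2 : sva r j ≠ d - 2 := by
      intro he
      have := hinj j (d-2) (by omega) (by omega) (by omega)
      omega
    omega
  have hlab : ∀ k, k < d - 1 → lb ℓ (phi d r) k = lb ℓ r k := by
    intro k hk
    unfold lb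
    congr 1
    funext i
    exact vco_phi hd hdN (by omega) i
  constructor
  · refine ⟨?_, ?_, ?_, ?_, ?_, ?_⟩
    · intro i hi
      rw [bco_phi]
      rcases Nat.lt_or_ge i d with h | h
      · rw [show i = d - 1 by omega]; exact hb
      · exact hr.1 i h
    · rw [Finset.sum_congr rfl (fun i _ => bco_phi i)]; exact hr.2.1
    · intro j hj
      rw [sva_phi hd hdN, if_neg (by omega)]
    · intro j hj
      rw [sva_phi hd hdN, if_pos (by omega)]
      have := hvlt j (by omega)
      omega
    · intro j j' hj hj' heq
      rw [sva_phi hd hdN, if_pos (by omega), sva_phi hd hdN, if_pos (by omega)] at heq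
      exact hinj j j' (by omega) (by omega) heq
    · intro k hk i
      rw [vco_phi hd hdN (by omega)]
      exact hr.2.2.2.2.2 k (by omega) i
  · rw [Finset.image_congr (fun k hk => hlab k (mem_range.1 hk))]
    conv_lhs => rw [← erase_last_range d (by omega)]
    exact hdoor

theorem psi_top_pos (hm : 1 ≤ m) (hd : 2 ≤ d) (hdN : d ≤ N) {r : RR N m}
    (hr : IsRoom (d-1) r) : 1 ≤ vco r (d-2) (d-2) := by
  rcases Nat.lt_or_ge d 3 with h3 | h3
  · -- d = 2
    have hd2 : d = 2 := by omega
    subst hd2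
    rw [show (2:ℕ) - 2 = 0 from rfl, vco_zero]
    have hsum := hr.2.1
    have hz : ∀ i ∈ range N, i ≠ 0 → bco r i = 0 := by
      intro i _ hi
      exact hr.1 i (by omega)
    rw [Finset.sum_eq_single 0 hz (fun h => absurd (mem_range.2 (by omega)) h)] at hsum
    omega
  · obtain ⟨j₁, hj₁, hj₁v⟩ := sva_surj hr (show d - 3 < d - 1 - 1 by omega)
    have hin : ∃ j < d - 2, sva r j + 1 = d - 2 := by
      refine ⟨j₁, by omega, by omega⟩
    have hout : ¬∃ j < d - 2, sva r j = d - 2 := by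
      rintro ⟨j, hj, hjv⟩
      have := hr.2.2.2.1 j (by omega)
      omega
    unfold vco
    rw [if_pos hin, if_neg hout]
    have := bco_nonneg r (d-2)
    omega

theorem psi_room (hm : 1 ≤ m) (hsp : Sper N m ℓ) (hd : 2 ≤ d) (hdN : d ≤ N) {r : RR N m}
    (hr : IsRoom (d-1) r)
    (hfull : (range (d-1)).image (lb ℓ r) = range (d-1)) :
    IsRoom d (psi d hdN hd r) ∧
      ((range d).erase (d-1)).image (lb ℓ (psi d hdN hd r)) = range (d-1) ∧
      Bd d (psi d hdN hd r, d-1) := by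
  have hinj := hr.2.2.2.2.1
  have hval := hr.2.2.2.1
  have htoppos := psi_top_pos hm hd hdN hr
  have hvtop : ∀ i, vco (psi d hdN hd r) (d-1) i
      = vco r (d-2) i + (if d - 2 + 1 = i then 1 else 0) - (if d - 2 = i then 1 else 0) := by
    intro i
    have hsplit : ∀ p : ℕ → Prop, ((∃ j < d - 1, p (sva (psi d hdN hd r) j)) ↔
        ((∃ j < d - 2, p (sva r j)) ∨ p (d-2))) := by
      intro p
      constructor
      · rintro ⟨j, hj, hpj⟩
        rw [sva_psi hd hdN] at hpj
        split_ifs at hpj with h1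
        · exact Or.inr hpj
        · exact Or.inl ⟨j, by omega, hpj⟩
      · rintro (⟨j, hj, hpj⟩ | hp)
        · refine ⟨j, by omega, ?_⟩
          rw [sva_psi hd hdN, if_neg (by omega)]
          exact hpj
        · refine ⟨d-2, by omega, ?_⟩
          rw [sva_psi hd hdN, if_pos rfl]
          exact hp
    have hdis1 : ¬((∃ j < d - 2, sva r j + 1 = i) ∧ d - 2 + 1 = i) := by
      rintro ⟨⟨j, hj, hji⟩, h2⟩
      have := hval j (by omega)
      omega
    have hdis2 : ¬((∃ j < d - 2, sva r j = i) ∧ d - 2 = i) := by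
      rintro ⟨⟨j, hj, hji⟩, h2⟩
      have := hval j (by omega)
      omega
    conv_lhs => unfold vco
    rw [bco_psi,
      if_congr (hsplit (fun v => v + 1 = i)) rfl rfl, if_congr (hsplit (fun v => v = i)) rfl rfl,
      ite_or_split hdis1, ite_or_split hdis2]
    have hR : vco r (d-2) i = bco r i + (if ∃ j < d - 2, sva r j + 1 = i then 1 else 0)
        - (if ∃ j < d - 2, sva r j = i then 1 else 0) := rfl
    rw [hR]
    ring
  have hroom : IsRoom d (psi d hdN hd r) := by
    refine ⟨?_, ?_, ?_, ?_, ?_, ?_⟩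
    · intro i hi
      rw [bco_psi]
      exact hr.1 i (by omega)
    · rw [Finset.sum_congr rfl (fun i _ => bco_psi hdN hd i)]
      exact hr.2.1
    · intro j hj
      rw [sva_psi hd hdN, if_neg (by omega)]
      exact hr.2.2.1 j (by omega)
    · intro j hj
      rw [sva_psi hd hdN]
      split_ifs with h1
      · omega
      · have := hval j (by omega)
        omega
    · intro j j' hj hj' heq
      rw [sva_psi hd hdN, sva_psi hd hdN] at heq
      split_ifs at heq with h1 h2 h3
      · omega
      · have := hr.2.2.2.1 j' (by omega)
        omega
      · have := hr.2.2.2.1 j (by omega)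
        omega
      · exact hinj j j' (by omega) (by omega) heq
    · intro k hk i
      rcases Nat.lt_or_ge k (d-1) with hkk | hkk
      · rw [vco_psi hd hdN (by omega)]
        exact hr.2.2.2.2.2 k (by omega) i
      · rw [show k = d - 1 by omega, hvtop]
        by_cases hi : d - 2 = i
        · rw [if_neg (by omega), if_pos hi, ← hi]
          omega
        · rw [if_neg hi]
          have := hr.2.2.2.2.2 (d-2) (by omega) i
          split_ifs <;> omega
  refine ⟨hroom, ?_, rfl, ?_, ?_⟩
  · rw [erase_last_range d (by omega)]
    have hlab : ∀ k ∈ range (d-1), lb ℓ (psi d hdN hd r) k = lb ℓ r k := by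
      intro k hk
      unfold lb
      congr 1
      funext i
      exact vco_psi hd hdN (by have := mem_range.1 hk; omega) i
    rw [Finset.image_congr hlab]
    exact hfull
  · rw [sva_psi hd hdN, if_pos rfl]
  · rw [bco_psi]
    exact hr.1 (d-1) (by omega)

open Classical in
theorem bdoor_card (hm : 1 ≤ m) (hsp : Sper N m ℓ) (hd : 2 ≤ d) (hdN : d ≤ N) :
    (((doorF ℓ d : Finset (RR N m × ℕ))).filter (fun p => Bd d p)).card
      = (fullF ℓ (d-1) : Finset (RR N m)).card := by
  classical
  apply Finset.card_bij (fun p _ => phi d p.1)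
  · rintro ⟨r, t⟩ hp
    rw [Finset.mem_filter, mem_doorF] at hp
    obtain ⟨⟨htd, hr, hdoor⟩, ht, hs, hb⟩ := hp
    subst ht
    obtain ⟨h1, h2⟩ := phi_full ℓ hsp hd hdN hr hdoor hs hb
    unfold fullF
    rw [Finset.mem_filter]
    exact ⟨Finset.mem_univ _, h1, h2⟩
  · rintro ⟨r, t⟩ hp ⟨r', t'⟩ hp' heq
    rw [Finset.mem_filter, mem_doorF] at hp hp'
    obtain ⟨⟨htd, hr, hdoor⟩, ht, hs, hb⟩ := hp
    obtain ⟨⟨htd', hr', hdoor'⟩, ht', hs', hb'⟩ := hp'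
    simp only at ht ht' hs hs' hb hb'
    have hre : r = r' := by
      apply RR_ext
      · intro i hi
        have := congrArg (fun x => bco x i) heq
        simpa [bco_phi] using this
      · intro j hj
        rcases Nat.lt_or_ge j (d-2) with hjd | hjd
        · have := congrArg (fun x => sva x j) heq
          simp only at this
          rwa [sva_phi hd hdN, sva_phi hd hdN, if_pos hjd, if_pos hjd] at this
        · rcases Nat.eq_or_lt_of_le hjd with hje | hjl
          · rw [hje] at hs hs'
            rw [hs, hs']
          · rw [hr.2.2.1 j (by omega), hr'.2.2.1 j (by omega)]
    rw [Prod.mk.injEq]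
    exact ⟨hre, by omega⟩
  · intro r'' hr''
    unfold fullF at hr''
    rw [Finset.mem_filter] at hr''
    obtain ⟨-, hroom'', hfull''⟩ := hr''
    obtain ⟨hroomP, hdoorP, hbdP⟩ := psi_room ℓ hm hsp hd hdN hroom'' hfull''
    refine ⟨(psi d hdN hd r'', d-1), ?_, ?_⟩
    · rw [Finset.mem_filter, mem_doorF]
      exact ⟨⟨by omega, hroomP, hdoorP⟩, hbdP⟩
    · -- phi d (psi d r'') = r''
      apply RR_ext
      · intro i hi
        rw [bco_phi, bco_psi]
      · intro j hj
        rw [sva_phi hd hdN, sva_psi hd hdN]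
        rcases Nat.lt_or_ge j (d-2) with hjd | hjd
        · rw [if_pos hjd, if_neg (by omega)]
        · rw [if_neg (by omega)]
          exact (hroom''.2.2.1 j (by omega)).symm

end boundary

section final

open Classical in
theorem full_card_one (hm : 1 ≤ m) (hsp : Sper N m ℓ) (hN : 1 ≤ N) :
    (fullF ℓ 1 : Finset (RR N m)).card = 1 := by
  classical
  set r₀ : RR N m := (fun i => if (i:ℕ) = 0 then ⟨m, by omega⟩ else ⟨0, by omega⟩,
    fun j => ⟨0, lt_of_le_of_lt (Nat.zero_le _) j.2⟩) with hr₀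
  have hbco : ∀ i, bco r₀ i = if i = 0 then (m:ℤ) else 0 := by
    intro i
    unfold bco
    split
    · next h =>
      show (((if i = 0 then (⟨m, by omega⟩ : Fin (m+1)) else ⟨0, by omega⟩) : Fin (m+1)) : ℤ) = _
      rw [apply_ite (fun x : Fin (m+1) => (x : ℤ))]
      split <;> simp
    · next h => rw [if_neg (by omega)]
  have hsva : ∀ j, sva r₀ j = 0 := by
    intro j
    unfold sva
    split <;> rfl
  have hroom : IsRoom 1 r₀ := by
    refine ⟨?_, ?_, ?_, ?_, ?_, ?_⟩
    · intro i hi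
      rw [hbco, if_neg (by omega)]
    · rw [Finset.sum_congr rfl (fun i _ => hbco i),
        Finset.sum_ite_eq' (range N) 0 (fun _ => (m:ℤ)), if_pos (mem_range.2 (by omega))]
    · intro j _
      exact hsva j
    · intro j hj
      omega
    · intro j j' hj hj' _
      omega
    · intro k hk i
      rw [show k = 0 by omega, vco_zero, hbco]
      split <;> omega
  have hfull : r₀ ∈ (fullF ℓ 1 : Finset (RR N m)) := by
    unfold fullF
    rw [Finset.mem_filter]
    refine ⟨Finset.mem_univ _, hroom, ?_⟩
    have hlt := (lb_lt ℓ hsp hN hroom (show 0 < 1 by omega)).1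
    rw [range_one, Finset.image_singleton]
    congr 1
    omega
  have huniq : ∀ r ∈ (fullF ℓ 1 : Finset (RR N m)), r = r₀ := by
    intro r hr
    unfold fullF at hr
    rw [Finset.mem_filter] at hr
    obtain ⟨-, hroom', -⟩ := hr
    apply RR_ext
    · intro i hi
      rw [hbco]
      rcases Nat.eq_zero_or_pos i with rfl | hi0
      · rw [if_pos rfl]
        have hsum := hroom'.2.1
        have hz : ∀ x ∈ range N, x ≠ 0 → bco r x = 0 := fun x _ hx => hroom'.1 x (by omega)
        rw [Finset.sum_eq_single 0 hz (fun h => absurd (mem_range.2 (by omega)) h)] at hsum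
        exact hsum
      · rw [if_neg (by omega)]
        exact hroom'.1 i (by omega)
    · intro j hj
      rw [hsva]
      exact hroom'.2.2.1 j (by omega)
  rw [show (fullF ℓ 1 : Finset (RR N m)) = {r₀} from
    Finset.eq_singleton_iff_unique_mem.2 ⟨hfull, huniq⟩, Finset.card_singleton]

open Classical in
theorem full_card_odd (hm : 1 ≤ m) (hsp : Sper N m ℓ) :
    ∀ d, 1 ≤ d → d ≤ N → (fullF ℓ d : Finset (RR N m)).card % 2 = 1 := by
  intro d
  induction d with
  | zero => omega
  | succ d ih =>
    intro h1 hdN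
    rcases Nat.eq_zero_or_pos d with rfl | hd0
    · rw [full_card_one ℓ hm hsp (by omega)]
    · have hd2 : 2 ≤ d + 1 := by omega
      have hstep := door_full_parity ℓ hsp (show 1 ≤ d+1 by omega) hdN
      have hsplitc := Finset.card_filter_add_card_filter_not
        (s := (doorF ℓ (d+1) : Finset (RR N m × ℕ))) (p := fun p => Bd (d+1) p)
      have hbd := bdoor_card ℓ hm hsp hd2 hdN
      have hid := idoor_even ℓ hsp hd2 hdN
      have hih := ih (by omega) (by omega)
      simp only [Nat.add_sub_cancel] at hbd
      omega

open Classical in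
theorem sperner_main (hm : 1 ≤ m) (hsp : Sper N m ℓ) (hN : 1 ≤ N) :
    ∃ r : RR N m, IsRoom N r ∧ ∀ i, i < N → ∃ k, k < N ∧ lb ℓ r k = i := by
  have hodd := full_card_odd ℓ hm hsp N hN (le_refl N)
  have hpos : 0 < (fullF ℓ N : Finset (RR N m)).card := by omega
  obtain ⟨r, hr⟩ := Finset.card_pos.1 hpos
  unfold fullF at hr
  rw [Finset.mem_filter] at hr
  obtain ⟨-, hroom, himg⟩ := hr
  refine ⟨r, hroom, ?_⟩
  intro i hi
  have : i ∈ (range N).image (lb ℓ r) := by rw [himg]; exact mem_range.2 hi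
  obtain ⟨k, hk, hki⟩ := mem_image.1 this
  exact ⟨k, mem_range.1 hk, hki⟩

end final

section bound

theorem vco_bnd (r : RR N m) (k i : ℕ) :
    bco r i - 1 ≤ vco r k i ∧ vco r k i ≤ bco r i + 1 := by
  unfold vco
  split_ifs <;> omega

end bound

section analytic

open Finset

variable {n : ℕ} (F : (Fin n → ℝ) → (Fin n → ℝ)) (b : Fin n → ℝ)

noncomputable def pt (n m : ℕ) (x : ℕ → ℤ) : Fin n → ℝ := fun i => (x i.val : ℝ) / m

noncomputable def lab (n m : ℕ) (F : (Fin n → ℝ) → (Fin n → ℝ)) (b : Fin n → ℝ) :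
    (ℕ → ℤ) → ℕ := fun x =>
  if h : ∃ i : Fin n, 0 < x i.val ∧ b i ≤ F (pt n m x) i then h.choose.val else 0

theorem pt_mem {m : ℕ} (hm : 1 ≤ m) (x : ℕ → ℤ) (h1 : ∀ i, 0 ≤ x i)
    (h2 : (∑ i ∈ range n, x i) = m) :
    pt n m x ∈ stdSimplex ℝ (Fin n) := by
  constructor
  · intro i
    apply div_nonneg _ (by positivity)
    exact_mod_cast h1 i.val
  · have : (∑ i : Fin n, ((x i.val : ℝ))) = m := by
      rw [Fin.sum_univ_eq_sum_range (fun i => ((x i : ℝ)))]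
      exact_mod_cast h2
    unfold pt
    rw [← Finset.sum_div, this]
    field_simp

theorem label_exists (hface : ∀ I : Set (Fin n),
      Set.MapsTo F {a | a ∈ stdSimplex ℝ (Fin n) ∧ ∀ i ∈ I, a i = 0}
        {a | a ∈ stdSimplex ℝ (Fin n) ∧ ∀ i ∈ I, a i = 0})
    (hb : b ∈ stdSimplex ℝ (Fin n)) {m : ℕ} (hm : 1 ≤ m) (x : ℕ → ℤ)
    (h1 : ∀ i, 0 ≤ x i) (h2 : (∑ i ∈ range n, x i) = m) :
    ∃ i : Fin n, 0 < x i.val ∧ b i ≤ F (pt n m x) i := by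
  classical
  set a := pt n m x with ha
  have haΔ : a ∈ stdSimplex ℝ (Fin n) := pt_mem hm x h1 h2
  have hFa : F a ∈ stdSimplex ℝ (Fin n) ∧ ∀ i ∈ {i : Fin n | x i.val = 0}, F a i = 0 := by
    apply hface {i : Fin n | x i.val = 0}
    refine ⟨haΔ, ?_⟩
    intro i hi
    have : x i.val = 0 := hi
    show ((x i.val : ℝ)) / m = 0
    rw [this]
    simp
  by_contra hno
  push_neg at hno
  have hle : ∀ i : Fin n, F a i ≤ b i := by
    intro i
    rcases (h1 i.val).lt_or_eq with hpos | hzero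
    · exact le_of_lt (hno i hpos)
    · have : F a i = 0 := hFa.2 i (by exact hzero.symm)
      rw [this]
      exact hb.1 i
  have hex : ∃ i₀ : Fin n, 0 < x i₀.val := by
    by_contra hall
    push_neg at hall
    have : (∑ i ∈ range n, x i) ≤ 0 := by
      apply Finset.sum_nonpos
      intro i hi
      exact hall ⟨i, mem_range.1 hi⟩
    omega
  obtain ⟨i₀, hi₀⟩ := hex
  have hstrict : (∑ i : Fin n, F a i) < ∑ i : Fin n, b i := by
    apply Finset.sum_lt_sum (fun i _ => hle i)
    exact ⟨i₀, Finset.mem_univ _, hno i₀ hi₀⟩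
  rw [hFa.1.2, hb.2] at hstrict
  exact lt_irrefl _ hstrict

theorem lab_sper (hface : ∀ I : Set (Fin n),
      Set.MapsTo F {a | a ∈ stdSimplex ℝ (Fin n) ∧ ∀ i ∈ I, a i = 0}
        {a | a ∈ stdSimplex ℝ (Fin n) ∧ ∀ i ∈ I, a i = 0})
    (hb : b ∈ stdSimplex ℝ (Fin n)) {m : ℕ} (hm : 1 ≤ m) :
    Sper n m (lab n m F b) := by
  intro x h1 h2 h3
  have hex := label_exists F b hface hb hm x h1 h2
  unfold lab
  rw [dif_pos hex]
  obtain ⟨hpos, -⟩ := hex.choose_spec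
  exact ⟨hex.choose.2, hpos⟩

theorem approx (hn : 1 ≤ n)
    (hface : ∀ I : Set (Fin n),
      Set.MapsTo F {a | a ∈ stdSimplex ℝ (Fin n) ∧ ∀ i ∈ I, a i = 0}
        {a | a ∈ stdSimplex ℝ (Fin n) ∧ ∀ i ∈ I, a i = 0})
    (hb : b ∈ stdSimplex ℝ (Fin n)) {m : ℕ} (hm : 1 ≤ m) :
    ∃ y : Fin n → (Fin n → ℝ), (∀ i, y i ∈ stdSimplex ℝ (Fin n)) ∧
      (∀ i, b i ≤ F (y i) i) ∧ (∀ i i' c, |y i c - y i' c| ≤ 2 / m) := by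
  classical
  set ℓ := lab n m F b with hℓ
  have hsp : Sper n m ℓ := lab_sper F b hface hb hm
  obtain ⟨r, hroom, hsel⟩ := sperner_main ℓ hm hsp hn
  have hk : ∀ i : Fin n, ∃ k, k < n ∧ lb ℓ r k = i.val := fun i => hsel i.val i.2
  set k : Fin n → ℕ := fun i => (hk i).choose with hkdef
  have hkspec : ∀ i : Fin n, k i < n ∧ lb ℓ r (k i) = i.val := fun i => (hk i).choose_spec
  set y : Fin n → (Fin n → ℝ) := fun i => pt n m (fun c => vco r (k i) c) with hy
  have hlat : ∀ i : Fin n, (∀ c, 0 ≤ vco r (k i) c) ∧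
      ((∑ c ∈ range n, vco r (k i) c) = m) := by
    intro i
    exact ⟨fun c => hroom.2.2.2.2.2 (k i) (hkspec i).1 c, vco_sum hroom (le_refl n) (hkspec i).1⟩
  refine ⟨y, ?_, ?_, ?_⟩
  · intro i
    exact pt_mem hm _ (hlat i).1 (hlat i).2
  · intro i
    have hlb := (hkspec i).2
    unfold lb at hlb
    rw [hℓ] at hlb
    unfold lab at hlb
    have hex : ∃ i' : Fin n, 0 < vco r (k i) i'.val ∧
        b i' ≤ F (pt n m (fun c => vco r (k i) c)) i' :=
      label_exists F b hface hb hm _ (hlat i).1 (hlat i).2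
    rw [dif_pos hex] at hlb
    have : hex.choose = i := Fin.ext hlb
    have hspec := hex.choose_spec
    rw [this] at hspec
    exact hspec.2
  · intro i i' c
    have hb1 := vco_bnd r (k i) c.val
    have hb2 := vco_bnd r (k i') c.val
    have habs : |vco r (k i) c.val - vco r (k i') c.val| ≤ 2 := by
      rw [abs_le]
      omega
    have habs' : |(vco r (k i) c.val : ℝ) - (vco r (k i') c.val : ℝ)| ≤ 2 := by
      rw [show ((vco r (k i) c.val : ℝ) - (vco r (k i') c.val : ℝ))
          = ((vco r (k i) c.val - vco r (k i') c.val : ℤ) : ℝ) by push_cast; ring,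
        ← Int.cast_abs]
      exact_mod_cast habs
    show |(vco r (k i) c.val : ℝ)/m - (vco r (k i') c.val : ℝ)/m| ≤ 2 / m
    rw [div_sub_div_same, abs_div, abs_of_pos (show (0:ℝ) < (m:ℝ) by positivity)]
    gcongr

end analytic

end SpernerAux

open Filter Topology

/-- A continuous self-map of the standard simplex
`Δⁿ = {a : aᵢ ≥ 0, Σ aᵢ = 1}` that maps every face
`{a ∈ Δⁿ : aᵢ = 0 for i ∈ I}` into itself is surjective. -/
theorem face_preserving_selfmap_surjective (n : ℕ)
    (F : (Fin n → ℝ) → (Fin n → ℝ))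
    (hcont : ContinuousOn F (stdSimplex ℝ (Fin n)))
    (hface : ∀ I : Set (Fin n),
      Set.MapsTo F {a | a ∈ stdSimplex ℝ (Fin n) ∧ ∀ i ∈ I, a i = 0}
        {a | a ∈ stdSimplex ℝ (Fin n) ∧ ∀ i ∈ I, a i = 0}) :
    Set.SurjOn F (stdSimplex ℝ (Fin n)) (stdSimplex ℝ (Fin n)) := by
  rcases Nat.eq_zero_or_pos n with rfl | hn
  · intro b hb
    exfalso
    have := hb.2
    simp at this
  · intro b hb
    classical
    choose y hy1 hy2 hy3 using
      fun t : ℕ => SpernerAux.approx F b hn hface hb (m := t+1) (by omega)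
    set i0 : Fin n := ⟨0, hn⟩ with hi0
    obtain ⟨a, haΔ, φ, hφ, hlim⟩ :=
      (isCompact_stdSimplex ℝ (Fin n)).tendsto_subseq (fun t => hy1 t i0)
    have hdist : ∀ (i : Fin n) (t : ℕ), dist (y t i) (y t i0) ≤ 2 / ((t+1 : ℕ) : ℝ) := by
      intro i t
      rw [dist_pi_le_iff (by positivity)]
      intro c
      rw [Real.dist_eq]
      exact hy3 t i i0 c
    have hlim' : ∀ i : Fin n, Tendsto (fun s => y (φ s) i) atTop (𝓝 a) := by
      intro i
      rw [tendsto_iff_dist_tendsto_zero]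
      apply squeeze_zero (fun s => dist_nonneg)
        (g := fun s => 2 / ((φ s + 1 : ℕ) : ℝ) + dist (y (φ s) i0) a)
      · intro s
        calc dist (y (φ s) i) a
            ≤ dist (y (φ s) i) (y (φ s) i0) + dist (y (φ s) i0) a := dist_triangle _ _ _
          _ ≤ 2 / ((φ s + 1 : ℕ) : ℝ) + dist (y (φ s) i0) a := by
              gcongr
              exact hdist i (φ s)
      · have h1 : Tendsto (fun s : ℕ => 2 / ((φ s + 1 : ℕ) : ℝ)) atTop (𝓝 0) :=
          (tendsto_const_div_atTop_nhds_zero_nat 2).comp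
            ((tendsto_add_atTop_nat 1).comp hφ.tendsto_atTop)
        have h2 : Tendsto (fun s => dist (y (φ s) i0) a) atTop (𝓝 0) :=
          tendsto_iff_dist_tendsto_zero.1 hlim
        simpa using h1.add h2
    have hge : ∀ i : Fin n, b i ≤ F a i := by
      intro i
      have hFt : Tendsto (fun s => F (y (φ s) i)) atTop (𝓝 (F a)) := by
        apply (hcont a haΔ).tendsto.comp
        rw [tendsto_nhdsWithin_iff]
        exact ⟨hlim' i, Eventually.of_forall (fun s => hy1 _ i)⟩
      have hFti : Tendsto (fun s => F (y (φ s) i) i) atTop (𝓝 (F a i)) :=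
        ((continuous_apply i).tendsto (F a)).comp hFt
      exact ge_of_tendsto' hFti (fun s => hy2 (φ s) i)
    have hFaΔ : F a ∈ stdSimplex ℝ (Fin n) := by
      have := hface ∅ (show a ∈ _ from ⟨haΔ, by simp⟩)
      exact this.1
    have hsum : (∑ i : Fin n, (F a i - b i)) = 0 := by
      rw [Finset.sum_sub_distrib, hFaΔ.2, hb.2]
      ring
    have hzero : ∀ i : Fin n, F a i - b i = 0 := by
      have := (Finset.sum_eq_zero_iff_of_nonneg
        (fun i _ => sub_nonneg.2 (hge i))).1 hsum
      intro i
      exact this i (Finset.mem_univ i)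
    exact ⟨a, haΔ, funext (fun i => by have := hzero i; linarith)⟩
end
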